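/- arXiv:2005.06905 — 3 statements merged into one kernel-verified Lean document; each statement's English description precedes it below -/
import Mathlib

section
/- There exists a constant C > 0, depending only on α and T, such that for all t sufficiently near T (with max(0, T − 1/e) < t < T) one has ψ₁(t) := (1/b_t²)·√( (b_t² − 2‖f_t‖²)² + 8‖f_t ⊗₁ f_t‖² ) ≤ C/√|log(T−t)|. -/
open MeasureTheory Real Filter Topology

/-- `λ_t := |log(T−t)|/(2α−1)`. -/
noncomputable def lam (T α t : ℝ) : ℝ := |Real.log (T - t)| / (2 * α - 1)

/-- The kernel `f_t`. -/
noncomputable def fker (T α t : ℝ) (u v : ℝ) : ℝ :=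
  if u ∈ Set.Icc (0:ℝ) t ∧ v ∈ Set.Icc (0:ℝ) t then
    (1 / (2 * Real.sqrt (lam T α t))) * (T - max u v) ^ (α - 1) * (T - min u v) ^ (-α)
  else 0

/-- The kernel `g_t`. -/
noncomputable def gker (T α t : ℝ) (u v : ℝ) : ℝ :=
  if u ∈ Set.Icc (0:ℝ) t ∧ v ∈ Set.Icc (0:ℝ) t then
    (T - u) ^ (-α) * (T - v) ^ (-α) *
      ((T - max u v) ^ (2 * α - 1) - (T - t) ^ (2 * α - 1)) / |Real.log (T - t)|
  else 0

/-- `⟨p,q⟩ := ∫_{[0,T]²} p(u,v) q(u,v) du dv`. -/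
noncomputable def ip (T : ℝ) (p q : ℝ → ℝ → ℝ) : ℝ :=
  ∫ u in Set.Icc (0:ℝ) T, ∫ v in Set.Icc (0:ℝ) T, p u v * q u v

/-- `‖p‖² := ⟨p,p⟩`. -/
noncomputable def normSq (T : ℝ) (p : ℝ → ℝ → ℝ) : ℝ := ip T p p

/-- The contraction `(p ⊗₁ q)(x,y) := ∫₀^T p(x,u) q(y,u) du`. -/
noncomputable def contr (T : ℝ) (p q : ℝ → ℝ → ℝ) : ℝ → ℝ → ℝ :=
  fun x y => ∫ u in Set.Icc (0:ℝ) T, p x u * q y u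

/-- `b_t := (1/λ_t)·∫₀ᵗ ∫₀ˢ (T−s)^{2α−2}(T−u)^{−2α} du ds`. -/
noncomputable def bfun (T α t : ℝ) : ℝ :=
  (1 / lam T α t) *
    ∫ s in (0:ℝ)..t, ∫ u in (0:ℝ)..s, (T - s) ^ (2 * α - 2) * (T - u) ^ (-(2 * α))

/-- `A_{t,1}`. -/
noncomputable def A1 (T α t : ℝ) : ℝ :=
  (1 / (lam T α t) ^ 2) *
    ∫ x4 in (0:ℝ)..t, ∫ x3 in (0:ℝ)..x4, ∫ x2 in (0:ℝ)..x3, ∫ x1 in (0:ℝ)..x2,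
      (T - x4) ^ (2 * α - 2) * (T - x3) ^ (-1 : ℝ) * (T - x2) ^ (-1 : ℝ) *
        (T - x1) ^ (-(2 * α))

/-- `A_{t,2}`. -/
noncomputable def A2 (T α t : ℝ) : ℝ :=
  (1 / (2 * (lam T α t) ^ 2)) *
    ∫ x4 in (0:ℝ)..t, ∫ x2 in (0:ℝ)..x4, ∫ x3 in (0:ℝ)..x2, ∫ x1 in (0:ℝ)..x3,
      (T - x4) ^ (2 * α - 2) * (T - x2) ^ (2 * α - 2) * (T - x3) ^ (-(2 * α)) *
        (T - x1) ^ (-(2 * α))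

/-!
Write `L = |log (T - t)|` and `k = (T - max)^(α-1) (T - min)^(-α)` on `[0,t]²`, so that
`f_t = k / (2 √λ_t)`. Everything reduces to the explicit integral
`D_r = ∫₀ᵗ ∫₀ˢ (T-s)^(r-2) (T-u)^(-r) du ds = (log T - log (T-t) - O(1/(r-1))) / (r-1)`.
First, `b_t = D_{2α} / λ_t = 1 + O(1/L)`; since `k²` integrates over the square to `2 D_{2α}`,
`2‖f_t‖² = b_t` exactly, and the first term under the root is `b_t² (b_t - 1)² = O(1/L²)`.
Second, for `x ≤ y` splitting `∫ k(x,u) k(y,u) du` at `x` and `y` bounds it by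
`(T-x)^(-α) (T-y)^(α-1) (2/(2α-1) + log ((T-x)/(T-y)))`; absorbing the logarithm into
`((T-x)/(T-y))^((2α-1)/4)` bounds its square by a multiple of the integrand of `D_{α+1/2}`, whence
`‖f_t ⊗₁ f_t‖² ≤ 2 D_{α+1/2} / L² = O(1/L)`. Hence `ψ₁(t) = O(L^(-1/2))`.
-/

open Set

section PowerIntegrals

variable {T a b c : ℝ}

lemma rpow_mul_rpow_of_add_eq {x p q r : ℝ} (hx : 0 < x) (h : p + q = r) :
    x ^ p * x ^ q = x ^ r := by
  rw [← Real.rpow_add hx, h]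

lemma continuousOn_sub_rpow (hb : b < T) (c : ℝ) :
    ContinuousOn (fun y : ℝ => (T - y) ^ c) (Icc a b) :=
  (continuousOn_const.sub continuousOn_id).rpow_const fun y hy =>
    Or.inl (sub_ne_zero.mpr (show T ≠ y by linarith [hy.2]))

lemma intervalIntegrable_sub_rpow (hab : a ≤ b) (hb : b < T) (c : ℝ) :
    IntervalIntegrable (fun y : ℝ => (T - y) ^ c) volume a b :=
  (continuousOn_sub_rpow hb c).intervalIntegrable_of_Icc hab

lemma integral_sub_rpow (hab : a ≤ b) (hb : b < T) (hc : c ≠ -1) :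
    ∫ y in a..b, (T - y) ^ c = ((T - a) ^ (c + 1) - (T - b) ^ (c + 1)) / (c + 1) := by
  rw [intervalIntegral.integral_comp_sub_left (fun x : ℝ => x ^ c) T,
    integral_rpow (Or.inr ⟨hc, fun h => by rw [uIcc_of_le (by linarith)] at h; linarith [h.1]⟩)]

lemma integral_sub_rpow_neg_one (hab : a ≤ b) (hb : b < T) :
    ∫ y in a..b, (T - y) ^ (-1 : ℝ) = log (T - a) - log (T - b) := by
  simp only [Real.rpow_neg_one]
  rw [intervalIntegral.integral_comp_sub_left (fun x : ℝ => x⁻¹) T,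
    integral_inv fun h => by rw [uIcc_of_le (by linarith)] at h; linarith [h.1],
    Real.log_div (by linarith) (by linarith)]

lemma integral_sub_rpow_le_of_lt_neg_one (hab : a ≤ b) (hb : b < T) (hc : c < -1) :
    ∫ y in a..b, (T - y) ^ c ≤ (T - b) ^ (c + 1) / -(c + 1) := by
  rw [integral_sub_rpow hab hb hc.ne, ← neg_div_neg_eq, neg_sub]
  gcongr
  · linarith
  · linarith [Real.rpow_nonneg (show 0 ≤ T - a by linarith) (c + 1)]

lemma integral_sub_rpow_le_of_neg_one_lt (hab : a ≤ b) (hb : b < T) (hc : -1 < c) :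
    ∫ y in a..b, (T - y) ^ c ≤ (T - a) ^ (c + 1) / (c + 1) := by
  rw [integral_sub_rpow hab hb hc.ne']
  gcongr
  · linarith
  · linarith [Real.rpow_nonneg (show 0 ≤ T - b by linarith) (c + 1)]

end PowerIntegrals

lemma setIntegral_Icc_indicator_Icc {t T : ℝ} (ht0 : 0 ≤ t) (htT : t ≤ T) (g : ℝ → ℝ) :
    ∫ y in Icc 0 T, (Icc 0 t).indicator g y = ∫ y in 0..t, g y := by
  rw [setIntegral_indicator measurableSet_Icc, Icc_inter_Icc, max_self, min_eq_right htT,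
    integral_Icc_eq_integral_Ioc, intervalIntegral.integral_of_le ht0]

lemma integral_integral_mono {X : Type*} [MeasurableSpace X] {μ : Measure X} {s : Set X}
    {F G : X → X → ℝ} (hF : ∀ x y, 0 ≤ F x y) (hFG : ∀ x y, F x y ≤ G x y)
    (hG : ∀ x, IntegrableOn (G x) s μ) (hG' : IntegrableOn (fun x => ∫ y in s, G x y ∂μ) s μ) :
    ∫ x in s, ∫ y in s, F x y ∂μ ∂μ ≤ ∫ x in s, ∫ y in s, G x y ∂μ ∂μ :=
  integral_mono_of_nonneg (.of_forall fun x => integral_nonneg (hF x)) hG' <|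
    .of_forall fun x => integral_mono_of_nonneg (.of_forall (hF x)) (hG x) (.of_forall (hFG x))

lemma add_log_sub_log_le {p q c ε : ℝ} (hp : 0 < p) (hq : 0 < q) (hε : 0 < ε) (hc : c * ε ≤ 1) :
    c + (log p - log q) ≤ p ^ ε * q ^ (-ε) / ε := by
  have h := log_le_sub_one_of_pos (rpow_pos_of_pos (div_pos hp hq) ε)
  rw [log_rpow (div_pos hp hq), log_div hp.ne' hq.ne', div_rpow hp.le hq.le,
    div_eq_mul_inv, ← rpow_neg hq.le] at h
  rw [le_div_iff₀ hε]
  nlinarith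

lemma contr_comm (T : ℝ) (p q : ℝ → ℝ → ℝ) (x y : ℝ) : contr T p q x y = contr T q p y x := by
  simp only [contr, mul_comm]

lemma normSq_const_mul (T c : ℝ) (p : ℝ → ℝ → ℝ) :
    normSq T (fun x y => c * p x y) = c ^ 2 * normSq T p := by
  simp only [normSq, ip, show ∀ x y, c * p x y * (c * p x y) = c ^ 2 * (p x y * p x y) from
    fun x y => by ring, integral_const_mul]

lemma contr_const_mul (T c : ℝ) (p q : ℝ → ℝ → ℝ) :
    contr T (fun x y => c * p x y) (fun x y => c * q x y) = fun x y => c ^ 2 * contr T p q x y := by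
  ext x y
  simp only [contr, show ∀ u, c * p x u * (c * q y u) = c ^ 2 * (p x u * q y u) from
    fun u => by ring, integral_const_mul]

section Kernel

variable {T t a b r x : ℝ}

noncomputable def minMaxKer (T t a b : ℝ) (x y : ℝ) : ℝ :=
  if x ∈ Icc 0 t ∧ y ∈ Icc 0 t then (T - max x y) ^ a * (T - min x y) ^ b else 0

lemma minMaxKer_comm (x y : ℝ) : minMaxKer T t a b x y = minMaxKer T t a b y x := by
  simp only [minMaxKer, max_comm, min_comm, and_comm]

lemma minMaxKer_of_notMem (hx : x ∉ Icc 0 t) (y : ℝ) : minMaxKer T t a b x y = 0 := by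
  simp [minMaxKer, hx]

lemma minMaxKer_of_le {y : ℝ} (hx : 0 ≤ x) (hxy : x ≤ y) (hy : y ≤ t) :
    minMaxKer T t a b x y = (T - y) ^ a * (T - x) ^ b := by
  rw [minMaxKer, if_pos ⟨⟨hx, hxy.trans hy⟩, hx.trans hxy, hy⟩, max_eq_right hxy, min_eq_left hxy]

lemma minMaxKer_nonneg (ht : t < T) (x y : ℝ) : 0 ≤ minMaxKer T t a b x y := by
  unfold minMaxKer
  split_ifs with h
  · exact mul_nonneg (rpow_nonneg (by linarith [max_le h.1.2 h.2.2]) _)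
      (rpow_nonneg (by linarith [min_le_left x y, h.1.2]) _)
  · exact le_rfl

lemma minMaxKer_mul (ht : t < T) (a' b' x y : ℝ) :
    minMaxKer T t a b x y * minMaxKer T t a' b' x y = minMaxKer T t (a + a') (b + b') x y := by
  unfold minMaxKer
  split_ifs with h
  · rw [rpow_add (by linarith [max_le h.1.2 h.2.2]),
      rpow_add (by linarith [min_le_left x y, h.1.2])]
    ring
  · simp

lemma minMaxKer_eq_indicator (hx : x ∈ Icc 0 t) :
    minMaxKer T t a b x = (Icc 0 t).indicator fun y => (T - max x y) ^ a * (T - min x y) ^ b := by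
  ext y
  by_cases hy : y ∈ Icc 0 t <;> simp [minMaxKer, hx, hy]

lemma continuousOn_minMaxKer_section (ht : t < T) (hx : x ≤ t) :
    ContinuousOn (fun y => (T - max x y) ^ a * (T - min x y) ^ b) (Icc 0 t) := by
  refine ContinuousOn.mul ?_ ?_ <;> refine ContinuousOn.rpow_const (by fun_prop) fun y hy => ?_
  · exact Or.inl (by linarith [max_le hx hy.2])
  · exact Or.inl (by linarith [min_le_left x y])

lemma integrableOn_minMaxKer (ht : t < T) (x : ℝ) :
    IntegrableOn (minMaxKer T t a b x) (Icc 0 T) := by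
  by_cases hx : x ∈ Icc 0 t
  · rw [minMaxKer_eq_indicator hx]
    exact ((continuousOn_minMaxKer_section ht hx.2).integrableOn_Icc.integrable_indicator
      measurableSet_Icc).integrableOn
  · rw [show minMaxKer T t a b x = 0 from funext (minMaxKer_of_notMem hx)]
    exact integrableOn_zero

noncomputable def kerMarginal (T t r x : ℝ) : ℝ :=
  (2 * (T - x) ^ (-1 : ℝ) - T ^ (1 - r) * (T - x) ^ (r - 2) - (T - t) ^ (r - 1) * (T - x) ^ (-r))
    / (r - 1)

lemma integral_minMaxKer_of_mem (ht : t < T) (hr : 1 < r) (hx : x ∈ Icc 0 t) :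
    ∫ y in Icc 0 T, minMaxKer T t (r - 2) (-r) x y = kerMarginal T t r x := by
  obtain ⟨hx0, hxt⟩ := hx
  have hcont := continuousOn_minMaxKer_section (a := r - 2) (b := -r) ht hxt
  rw [minMaxKer_eq_indicator ⟨hx0, hxt⟩, setIntegral_Icc_indicator_Icc (hx0.trans hxt) ht.le,
    ← intervalIntegral.integral_add_adjacent_intervals (b := x)
      ((hcont.mono (Icc_subset_Icc le_rfl hxt)).intervalIntegrable_of_Icc hx0)
      ((hcont.mono (Icc_subset_Icc hx0 le_rfl)).intervalIntegrable_of_Icc hxt)]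
  have below : ∫ y in 0..x, (T - max x y) ^ (r - 2) * (T - min x y) ^ (-r)
      = (T - x) ^ (r - 2) * ∫ y in 0..x, (T - y) ^ (-r) := by
    rw [← intervalIntegral.integral_const_mul]
    refine intervalIntegral.integral_congr fun y hy => ?_
    rw [uIcc_of_le hx0] at hy
    simp only [max_eq_left hy.2, min_eq_right hy.2]
  have above : ∫ y in x..t, (T - max x y) ^ (r - 2) * (T - min x y) ^ (-r)
      = (T - x) ^ (-r) * ∫ y in x..t, (T - y) ^ (r - 2) := by
    rw [← intervalIntegral.integral_const_mul]
    refine intervalIntegral.integral_congr fun y hy => ?_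
    rw [uIcc_of_le hxt] at hy
    simp only [max_eq_right hy.1, min_eq_left hy.1, mul_comm]
  have hTx : 0 < T - x := by linarith
  have e₁ : (T - x) ^ (r - 2) * (T - x) ^ (1 - r) = (T - x) ^ (-1 : ℝ) :=
    rpow_mul_rpow_of_add_eq hTx (by ring)
  have e₂ : (T - x) ^ (-r) * (T - x) ^ (r - 1) = (T - x) ^ (-1 : ℝ) :=
    rpow_mul_rpow_of_add_eq hTx (by ring)
  have hinv : (1 - r)⁻¹ = -(r - 1)⁻¹ := by rw [← inv_neg, neg_sub]
  rw [below, above, integral_sub_rpow hx0 (by linarith) (by linarith),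
    integral_sub_rpow hxt ht (by linarith), sub_zero, kerMarginal,
    show -r + 1 = 1 - r by ring, show r - 2 + 1 = r - 1 by ring]
  linear_combination (e₁ + e₂) / (r - 1)
    + (T - x) ^ (r - 2) * (T ^ (1 - r) - (T - x) ^ (1 - r)) * hinv

end Kernel

section TriangleMass

variable {T t r : ℝ}

-- `D_r` of the header, in closed form.
noncomputable def triangleMass (T t r : ℝ) : ℝ :=
  ((log T - log (T - t)) - (1 - T ^ (1 - r) * (T - t) ^ (r - 1)) / (r - 1)) / (r - 1)

lemma integral_kerMarginal (ht0 : 0 ≤ t) (ht : t < T) (hr : 1 < r) :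
    ∫ x in 0..t, kerMarginal T t r x = 2 * triangleMass T t r := by
  have hT : 0 < T := by linarith
  have i₁ := intervalIntegrable_sub_rpow ht0 ht (-1)
  have i₂ := intervalIntegrable_sub_rpow ht0 ht (r - 2)
  have i₃ := intervalIntegrable_sub_rpow ht0 ht (-r)
  have e₁ : T ^ (1 - r) * T ^ (r - 1) = 1 := by
    rw [rpow_mul_rpow_of_add_eq hT (by ring : 1 - r + (r - 1) = 0), rpow_zero]
  have e₂ : (T - t) ^ (r - 1) * (T - t) ^ (1 - r) = 1 := by
    rw [rpow_mul_rpow_of_add_eq (by linarith) (by ring : r - 1 + (1 - r) = 0), rpow_zero]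
  have hinv : (1 - r)⁻¹ = -(r - 1)⁻¹ := by rw [← inv_neg, neg_sub]
  simp only [kerMarginal]
  rw [intervalIntegral.integral_div, intervalIntegral.integral_sub ((i₁.const_mul 2).sub
      (i₂.const_mul _)) (i₃.const_mul _), intervalIntegral.integral_sub (i₁.const_mul 2)
      (i₂.const_mul _), intervalIntegral.integral_const_mul, intervalIntegral.integral_const_mul,
    intervalIntegral.integral_const_mul, integral_sub_rpow_neg_one ht0 ht,
    integral_sub_rpow ht0 ht (by linarith), integral_sub_rpow ht0 ht (by linarith), sub_zero,
    show -r + 1 = 1 - r by ring, show r - 2 + 1 = r - 1 by ring, triangleMass]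
  linear_combination (-(e₁ + e₂) / (r - 1) / (r - 1)
    - (T - t) ^ (r - 1) * (T ^ (1 - r) - (T - t) ^ (1 - r)) / (r - 1) * hinv)

lemma integral_triangle (ht0 : 0 ≤ t) (ht : t < T) (hr : 1 < r) :
    ∫ s in 0..t, ∫ u in 0..s, (T - s) ^ (r - 2) * (T - u) ^ (-r) = triangleMass T t r := by
  have hT : 0 < T := by linarith
  have hinv : (1 - r)⁻¹ = -(r - 1)⁻¹ := by rw [← inv_neg, neg_sub]
  have inner : ∀ s ∈ uIcc 0 t, ∫ u in 0..s, (T - s) ^ (r - 2) * (T - u) ^ (-r)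
      = ((T - s) ^ (-1 : ℝ) - T ^ (1 - r) * (T - s) ^ (r - 2)) / (r - 1) := by
    intro s hs
    rw [uIcc_of_le ht0] at hs
    have e : (T - s) ^ (r - 2) * (T - s) ^ (1 - r) = (T - s) ^ (-1 : ℝ) :=
      rpow_mul_rpow_of_add_eq (by linarith [hs.2]) (by ring)
    rw [intervalIntegral.integral_const_mul, integral_sub_rpow hs.1 (by linarith [hs.2])
      (by linarith), sub_zero, show -r + 1 = 1 - r by ring]
    linear_combination e / (r - 1) + (T - s) ^ (r - 2) * (T ^ (1 - r) - (T - s) ^ (1 - r)) * hinv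
  have e : T ^ (1 - r) * T ^ (r - 1) = 1 := by
    rw [rpow_mul_rpow_of_add_eq hT (by ring : 1 - r + (r - 1) = 0), rpow_zero]
  rw [intervalIntegral.integral_congr inner, intervalIntegral.integral_div,
    intervalIntegral.integral_sub (intervalIntegrable_sub_rpow ht0 ht (-1))
      ((intervalIntegrable_sub_rpow ht0 ht (r - 2)).const_mul _),
    intervalIntegral.integral_const_mul, integral_sub_rpow_neg_one ht0 ht,
    integral_sub_rpow ht0 ht (by linarith), sub_zero, show r - 2 + 1 = r - 1 by ring,
    triangleMass]
  linear_combination -e / (r - 1) / (r - 1)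

lemma rpow_one_sub_mul_sub_rpow_le_one (ht0 : 0 ≤ t) (ht : t < T) (hr : 1 ≤ r) :
    T ^ (1 - r) * (T - t) ^ (r - 1) ≤ 1 := by
  have hT : 0 < T := by linarith
  rw [show 1 - r = -(r - 1) by ring, rpow_neg hT.le, inv_mul_le_one₀ (by positivity)]
  exact rpow_le_rpow (by linarith) (by linarith) (by linarith)

lemma mul_triangleMass_le (ht0 : 0 ≤ t) (ht : t < T) (hr : 1 < r) :
    (r - 1) * triangleMass T t r ≤ log T - log (T - t) := by
  have hq := rpow_one_sub_mul_sub_rpow_le_one ht0 ht hr.le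
  rw [triangleMass, mul_div_cancel₀ _ (by linarith)]
  linarith [div_nonneg (by linarith : 0 ≤ 1 - T ^ (1 - r) * (T - t) ^ (r - 1))
    (by linarith : (0 : ℝ) ≤ r - 1)]

lemma le_mul_triangleMass (ht0 : 0 ≤ t) (ht : t < T) (hr : 1 < r) :
    log T - log (T - t) - 1 / (r - 1) ≤ (r - 1) * triangleMass T t r := by
  have hq : 0 ≤ T ^ (1 - r) * (T - t) ^ (r - 1) := by
    have : 0 < T := by linarith
    have : 0 < T - t := by linarith
    positivity
  rw [triangleMass, mul_div_cancel₀ _ (by linarith)]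
  gcongr
  · linarith

end TriangleMass

section DoubleIntegral

variable {T t r : ℝ}

lemma integral_minMaxKer_eq_indicator (ht : t < T) (hr : 1 < r) :
    (fun x => ∫ y in Icc 0 T, minMaxKer T t (r - 2) (-r) x y)
      = (Icc 0 t).indicator (kerMarginal T t r) := by
  ext x
  by_cases hx : x ∈ Icc 0 t
  · rw [indicator_of_mem hx, integral_minMaxKer_of_mem ht hr hx]
  · simp [indicator_of_notMem hx, minMaxKer_of_notMem hx]

lemma continuousOn_kerMarginal (ht : t < T) : ContinuousOn (kerMarginal T t r) (Icc 0 t) := by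
  have h := continuousOn_sub_rpow (a := 0) ht
  exact (((continuousOn_const.mul (h _)).sub (continuousOn_const.mul (h _))).sub
    (continuousOn_const.mul (h _))).div_const _

lemma integrableOn_integral_minMaxKer (ht : t < T) (hr : 1 < r) :
    IntegrableOn (fun x => ∫ y in Icc 0 T, minMaxKer T t (r - 2) (-r) x y) (Icc 0 T) := by
  rw [integral_minMaxKer_eq_indicator ht hr]
  exact ((continuousOn_kerMarginal ht).integrableOn_Icc.integrable_indicator
    measurableSet_Icc).integrableOn

lemma integral_integral_minMaxKer (ht0 : 0 ≤ t) (ht : t < T) (hr : 1 < r) :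
    ∫ x in Icc 0 T, ∫ y in Icc 0 T, minMaxKer T t (r - 2) (-r) x y = 2 * triangleMass T t r := by
  rw [integral_minMaxKer_eq_indicator ht hr, setIntegral_Icc_indicator_Icc ht0 ht.le,
    integral_kerMarginal ht0 ht hr]

end DoubleIntegral

section Contraction

variable {T t α : ℝ}

lemma contr_minMaxKer_of_mem {a b x y : ℝ} (ht : t < T) (hx : x ∈ Icc 0 t) (hy : y ∈ Icc 0 t) :
    contr T (minMaxKer T t a b) (minMaxKer T t a b) x y
      = ∫ u in 0..t,
          (T - max x u) ^ a * (T - min x u) ^ b * ((T - max y u) ^ a * (T - min y u) ^ b) := by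
  rw [contr, minMaxKer_eq_indicator hx, minMaxKer_eq_indicator hy]
  simp only [← indicator_mul]
  exact setIntegral_Icc_indicator_Icc (hx.1.trans hx.2) ht.le _

lemma contr_minMaxKer_eq_of_le {a b x y : ℝ} (ht : t < T) (hx : 0 ≤ x) (hxy : x ≤ y) (hy : y ≤ t) :
    contr T (minMaxKer T t a b) (minMaxKer T t a b) x y
      = (T - x) ^ a * (T - y) ^ a * (∫ u in 0..x, (T - u) ^ (b + b))
        + (T - x) ^ b * (T - y) ^ a * (∫ u in x..y, (T - u) ^ (a + b))
        + (T - x) ^ b * (T - y) ^ b * (∫ u in y..t, (T - u) ^ (a + a)) := by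
  set ψ := fun u => (T - max x u) ^ a * (T - min x u) ^ b * ((T - max y u) ^ a * (T - min y u) ^ b)
  have hψ : ContinuousOn ψ (Icc 0 t) :=
    (continuousOn_minMaxKer_section ht (hxy.trans hy)).mul (continuousOn_minMaxKer_section ht hy)
  have hint : ∀ c d, 0 ≤ c → c ≤ d → d ≤ t → IntervalIntegrable ψ volume c d :=
    fun c d hc hcd hd => (hψ.mono (Icc_subset_Icc hc hd)).intervalIntegrable_of_Icc hcd
  have below : ∫ u in 0..x, ψ u = (T - x) ^ a * (T - y) ^ a * ∫ u in 0..x, (T - u) ^ (b + b) := by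
    rw [← intervalIntegral.integral_const_mul]
    refine intervalIntegral.integral_congr fun u hu => ?_
    rw [uIcc_of_le hx] at hu
    simp only [ψ, max_eq_left hu.2, min_eq_right hu.2, max_eq_left (hu.2.trans hxy),
      min_eq_right (hu.2.trans hxy), rpow_add (show 0 < T - u by linarith [hu.2])]
    ring
  have middle : ∫ u in x..y, ψ u = (T - x) ^ b * (T - y) ^ a * ∫ u in x..y, (T - u) ^ (a + b) := by
    rw [← intervalIntegral.integral_const_mul]
    refine intervalIntegral.integral_congr fun u hu => ?_
    rw [uIcc_of_le hxy] at hu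
    simp only [ψ, max_eq_right hu.1, min_eq_left hu.1, max_eq_left hu.2, min_eq_right hu.2,
      rpow_add (show 0 < T - u by linarith [hu.2])]
    ring
  have above : ∫ u in y..t, ψ u = (T - x) ^ b * (T - y) ^ b * ∫ u in y..t, (T - u) ^ (a + a) := by
    rw [← intervalIntegral.integral_const_mul]
    refine intervalIntegral.integral_congr fun u hu => ?_
    rw [uIcc_of_le hy] at hu
    simp only [ψ, max_eq_right hu.1, min_eq_left hu.1, max_eq_right (hxy.trans hu.1),
      min_eq_left (hxy.trans hu.1), rpow_add (show 0 < T - u by linarith [hu.2])]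
    ring
  rw [contr_minMaxKer_of_mem ht ⟨hx, hxy.trans hy⟩ ⟨hx.trans hxy, hy⟩,
    ← intervalIntegral.integral_add_adjacent_intervals (b := y) (hint 0 y le_rfl (hx.trans hxy) hy)
      (hint y t (hx.trans hxy) hy le_rfl),
    ← intervalIntegral.integral_add_adjacent_intervals (b := x) (hint 0 x le_rfl hx (hxy.trans hy))
      (hint x y hx hxy hy), below, middle, above]

lemma contr_minMaxKer_le_of_le (hα : 1 / 2 < α) (ht : t < T) {x y : ℝ} (hx : 0 ≤ x) (hxy : x ≤ y)
    (hy : y ≤ t) :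
    contr T (minMaxKer T t (α - 1) (-α)) (minMaxKer T t (α - 1) (-α)) x y
      ≤ (T - x) ^ (-α) * (T - y) ^ (α - 1) * (2 / (2 * α - 1) + (log (T - x) - log (T - y))) := by
  have hTx : 0 < T - x := by linarith
  have hTy : 0 < T - y := by linarith
  have below : ∫ u in 0..x, (T - u) ^ (-α + -α) ≤ (T - x) ^ (-α + -α + 1) / -(-α + -α + 1) :=
    integral_sub_rpow_le_of_lt_neg_one hx (by linarith) (by linarith)
  have middle : ∫ u in x..y, (T - u) ^ (α - 1 + -α) = log (T - x) - log (T - y) := by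
    rw [show α - 1 + -α = -1 by ring]
    exact integral_sub_rpow_neg_one hxy (by linarith)
  have above : ∫ u in y..t, (T - u) ^ (α - 1 + (α - 1))
      ≤ (T - y) ^ (α - 1 + (α - 1) + 1) / (α - 1 + (α - 1) + 1) :=
    integral_sub_rpow_le_of_neg_one_lt hy ht (by linarith)
  have e₁ : (T - x) ^ (α - 1) * (T - x) ^ (-α + -α + 1) = (T - x) ^ (-α) :=
    rpow_mul_rpow_of_add_eq hTx (by ring)
  have e₂ : (T - y) ^ (-α) * (T - y) ^ (α - 1 + (α - 1) + 1) = (T - y) ^ (α - 1) :=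
    rpow_mul_rpow_of_add_eq hTy (by ring)
  rw [contr_minMaxKer_eq_of_le ht hx hxy hy, middle]
  calc _ ≤ (T - x) ^ (α - 1) * (T - y) ^ (α - 1) * ((T - x) ^ (-α + -α + 1) / -(-α + -α + 1))
        + (T - x) ^ (-α) * (T - y) ^ (α - 1) * (log (T - x) - log (T - y))
        + (T - x) ^ (-α) * (T - y) ^ (-α)
          * ((T - y) ^ (α - 1 + (α - 1) + 1) / (α - 1 + (α - 1) + 1)) := by
        gcongr
    _ = _ := by
        linear_combination (T - y) ^ (α - 1) / (2 * α - 1) * e₁ + (T - x) ^ (-α) / (2 * α - 1) * e₂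

lemma contr_minMaxKer_of_notMem {a b x : ℝ} (hx : x ∉ Icc 0 t) (y : ℝ) :
    contr T (minMaxKer T t a b) (minMaxKer T t a b) x y = 0 := by
  simp [contr, minMaxKer_of_notMem hx]

lemma contr_minMaxKer_le (hα : 1 / 2 < α) (ht : t < T) (x y : ℝ) :
    contr T (minMaxKer T t (α - 1) (-α)) (minMaxKer T t (α - 1) (-α)) x y
      ≤ 4 / (2 * α - 1) * minMaxKer T t ((2 * α - 3) / 4) (-(2 * α + 1) / 4) x y := by
  wlog hxy : x ≤ y generalizing x y
  · rw [contr_comm, minMaxKer_comm]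
    exact this y x (le_of_not_ge hxy)
  have hβ : 0 < 2 * α - 1 := by linarith
  by_cases hmem : x ∈ Icc 0 t ∧ y ∈ Icc 0 t
  swap
  · have h0 : contr T (minMaxKer T t (α - 1) (-α)) (minMaxKer T t (α - 1) (-α)) x y = 0 := by
      rcases not_and_or.mp hmem with hx | hy
      · exact contr_minMaxKer_of_notMem hx y
      · rw [contr_comm]
        exact contr_minMaxKer_of_notMem hy x
    rw [h0]
    exact mul_nonneg (by positivity) (minMaxKer_nonneg ht x y)
  obtain ⟨hx, hy⟩ := hmem
  have hTx : 0 < T - x := by linarith [hx.2]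
  have hTy : 0 < T - y := by linarith [hy.2]
  -- `ε = (2α-1)/4` makes the square of the resulting kernel the integrand of `D_{α+1/2}`.
  have hlog := add_log_sub_log_le (c := 2 / (2 * α - 1)) hTx hTy
    (by positivity : 0 < (2 * α - 1) / 4) (by field_simp; norm_num)
  calc _ ≤ (T - x) ^ (-α) * (T - y) ^ (α - 1) * (2 / (2 * α - 1) + (log (T - x) - log (T - y))) :=
        contr_minMaxKer_le_of_le hα ht hx.1 hxy hy.2
    _ ≤ (T - x) ^ (-α) * (T - y) ^ (α - 1)
          * ((T - x) ^ ((2 * α - 1) / 4) * (T - y) ^ (-((2 * α - 1) / 4)) / ((2 * α - 1) / 4)) := by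
        gcongr
    _ = _ := by
        rw [minMaxKer_of_le hx.1 hxy hy.2,
          ← rpow_mul_rpow_of_add_eq hTx (by ring : -α + (2 * α - 1) / 4 = -(2 * α + 1) / 4),
          ← rpow_mul_rpow_of_add_eq hTy (by ring : α - 1 + -((2 * α - 1) / 4) = (2 * α - 3) / 4)]
        field_simp

lemma normSq_contr_minMaxKer_le (hα : 1 / 2 < α) (ht0 : 0 ≤ t) (ht : t < T) :
    normSq T (contr T (minMaxKer T t (α - 1) (-α)) (minMaxKer T t (α - 1) (-α)))
      ≤ 16 / (2 * α - 1) ^ 2 * (2 * triangleMass T t (α + 1 / 2)) := by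
  have hr : 1 < α + 1 / 2 := by linarith
  have hβ : 0 < 2 * α - 1 := by linarith
  have hH : ∀ x y, 0 ≤ contr T (minMaxKer T t (α - 1) (-α)) (minMaxKer T t (α - 1) (-α)) x y :=
    fun x y => setIntegral_nonneg measurableSet_Icc fun u _ =>
      mul_nonneg (minMaxKer_nonneg ht x u) (minMaxKer_nonneg ht y u)
  have hsq : ∀ x y, minMaxKer T t ((2 * α - 3) / 4) (-(2 * α + 1) / 4) x y
      * minMaxKer T t ((2 * α - 3) / 4) (-(2 * α + 1) / 4) x y
      = minMaxKer T t (α + 1 / 2 - 2) (-(α + 1 / 2)) x y := fun x y => by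
    rw [minMaxKer_mul ht]
    congr 1 <;> ring
  rw [normSq, ip, ← integral_integral_minMaxKer ht0 ht hr, ← integral_const_mul]
  simp only [← integral_const_mul]
  refine integral_integral_mono (fun x y => mul_self_nonneg _) (fun x y => ?_)
    (fun x => (integrableOn_minMaxKer ht x).const_mul _) ?_
  · calc _ ≤ (4 / (2 * α - 1) * minMaxKer T t ((2 * α - 3) / 4) (-(2 * α + 1) / 4) x y)
            * (4 / (2 * α - 1) * minMaxKer T t ((2 * α - 3) / 4) (-(2 * α + 1) / 4) x y) :=
          mul_self_le_mul_self (hH x y) (contr_minMaxKer_le hα ht x y)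
      _ = _ := by rw [← hsq]; field_simp; ring
  · simp only [integral_const_mul]
    exact (integrableOn_integral_minMaxKer ht hr).const_mul _

end Contraction

section Fker

variable {T t α : ℝ}

lemma fker_eq :
    fker T α t = fun u v => 1 / (2 * √(lam T α t)) * minMaxKer T t (α - 1) (-α) u v := by
  ext u v
  unfold fker minMaxKer
  split_ifs <;> ring

lemma lam_nonneg (hα : 1 / 2 < α) : 0 ≤ lam T α t :=
  div_nonneg (abs_nonneg _) (by linarith)

lemma bfun_eq (hα : 1 / 2 < α) (ht0 : 0 ≤ t) (ht : t < T) :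
    bfun T α t = triangleMass T t (2 * α) / lam T α t := by
  rw [bfun, integral_triangle ht0 ht (by linarith)]
  ring

lemma two_mul_normSq_fker (hα : 1 / 2 < α) (ht0 : 0 ≤ t) (ht : t < T) :
    2 * normSq T (fker T α t) = bfun T α t := by
  rw [fker_eq, normSq_const_mul, normSq, ip]
  simp only [minMaxKer_mul ht]
  rw [show α - 1 + (α - 1) = 2 * α - 2 by ring, show -α + -α = -(2 * α) by ring,
    integral_integral_minMaxKer ht0 ht (by linarith), bfun_eq hα ht0 ht, div_pow, mul_pow,
    sq_sqrt (lam_nonneg hα)]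
  ring

lemma normSq_contr_fker_le (hα : 1 / 2 < α) (ht0 : 0 ≤ t) (ht : t < T) :
    normSq T (contr T (fker T α t) (fker T α t))
      ≤ 2 * triangleMass T t (α + 1 / 2) / log (T - t) ^ 2 := by
  rw [fker_eq, contr_const_mul, normSq_const_mul]
  calc _ ≤ ((1 / (2 * √(lam T α t))) ^ 2) ^ 2
          * (16 / (2 * α - 1) ^ 2 * (2 * triangleMass T t (α + 1 / 2))) := by
        gcongr
        exact normSq_contr_minMaxKer_le hα ht0 ht
    _ = _ := by
        have : 2 * α - 1 ≠ 0 := by linarith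
        rw [div_pow, mul_pow, sq_sqrt (lam_nonneg hα), lam, ← sq_abs (log (T - t))]
        field_simp
        ring

lemma abs_bfun_sub_one_le (hα : 1 / 2 < α) (ht0 : 0 ≤ t) (ht : t < T) (hlog : log (T - t) < 0) :
    |bfun T α t - 1| ≤ (|log T| + 1 / (2 * α - 1)) / |log (T - t)| := by
  have hβ : 2 * α - 1 ≠ 0 := by linarith
  have hL : log (T - t) ≠ 0 := hlog.ne
  have hup := mul_triangleMass_le ht0 ht (show 1 < 2 * α by linarith)
  have hlow := le_mul_triangleMass ht0 ht (show 1 < 2 * α by linarith)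
  rw [bfun_eq hα ht0 ht, lam, abs_of_neg hlog,
    show triangleMass T t (2 * α) / (-log (T - t) / (2 * α - 1)) - 1
      = ((2 * α - 1) * triangleMass T t (2 * α) - -log (T - t)) / -log (T - t) by
      field_simp; ring,
    abs_div, abs_of_pos (neg_pos.mpr hlog)]
  exact div_le_div_of_nonneg_right (abs_le.mpr ⟨by linarith [neg_abs_le (log T)],
    by linarith [le_abs_self (log T)]⟩) (by linarith)

lemma normSq_contr_fker_le_div (hα : 1 / 2 < α) (ht0 : 0 ≤ t) (ht : t < T)
    (hlog : log (T - t) ≤ -1) :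
    normSq T (contr T (fker T α t) (fker T α t))
      ≤ 4 * (1 + |log T|) / (2 * α - 1) / |log (T - t)| := by
  have hβ : 0 < 2 * α - 1 := by linarith
  have hL : 0 ≤ -log (T - t) - 1 := by linarith
  have hD : (2 * α - 1) * triangleMass T t (α + 1 / 2) ≤ 2 * (|log T| + -log (T - t)) := by
    linarith [mul_triangleMass_le ht0 ht (show 1 < α + 1 / 2 by linarith), le_abs_self (log T)]
  refine (normSq_contr_fker_le hα ht0 ht).trans ?_
  rw [abs_of_neg (show log (T - t) < 0 by linarith), div_div,
    div_le_div_iff₀ (by nlinarith) (mul_pos hβ (by linarith))]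
  nlinarith [mul_le_mul_of_nonneg_right hD (by linarith : 0 ≤ -log (T - t)),
    mul_nonneg (mul_nonneg (abs_nonneg (log T)) (by linarith : 0 ≤ -log (T - t))) hL]

end Fker

lemma psi_le_of_bounds {b F G L c K : ℝ} (hL : 1 ≤ L) (hcL : 2 * c ≤ L) (hb : |b - 1| ≤ c / L)
    (hF : 2 * F = b) (hG : G ≤ K / L) :
    1 / b ^ 2 * √((b ^ 2 - 2 * F) ^ 2 + 8 * G) ≤ 4 * √(4 * c ^ 2 + 8 * K) / √L := by
  have hL0 : 0 < L := by linarith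
  have hcL' : c / L ≤ 1 / 2 := by rw [div_le_iff₀ hL0]; linarith
  obtain ⟨hb₁, hb₂⟩ := abs_le.mp (hb.trans hcL')
  have hsq : (b - 1) ^ 2 ≤ c ^ 2 / L := by
    calc (b - 1) ^ 2 = |b - 1| ^ 2 := (sq_abs _).symm
      _ ≤ (c / L) ^ 2 := pow_le_pow_left₀ (abs_nonneg _) hb 2
      _ = c ^ 2 / L / L := by ring
      _ ≤ c ^ 2 / L := div_le_self (by positivity) hL
  have harg : (b ^ 2 - 2 * F) ^ 2 + 8 * G ≤ (4 * c ^ 2 + 8 * K) / L := by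
    rw [hF, show (b ^ 2 - b) ^ 2 = b ^ 2 * (b - 1) ^ 2 by ring, add_div, mul_div_assoc,
      mul_div_assoc]
    have : b ^ 2 ≤ 4 := by nlinarith
    nlinarith [sq_nonneg (b - 1)]
  have hb_inv : 1 / b ^ 2 ≤ 4 := by
    rw [div_le_iff₀ (by nlinarith)]
    nlinarith
  calc _ ≤ 4 * √((4 * c ^ 2 + 8 * K) / L) :=
        mul_le_mul hb_inv (sqrt_le_sqrt harg) (sqrt_nonneg _) (by norm_num)
    _ = _ := by rw [sqrt_div' _ hL0.le, mul_div_assoc]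

lemma exists_forall_of_eventually_nhdsLT {m T : ℝ} {P : ℝ → Prop} (hm : m < T)
    (h : ∀ᶠ t in 𝓝[<] T, P t) : ∃ t₀, m < t₀ ∧ t₀ < T ∧ ∀ t, t₀ < t → t < T → P t := by
  obtain ⟨l, hl, hsub⟩ := mem_nhdsLT_iff_exists_Ioo_subset.mp h
  obtain ⟨t₀, h₁, h₂⟩ := exists_between (max_lt hm hl)
  exact ⟨t₀, (le_max_left _ _).trans_lt h₁, h₂,
    fun t ht htT => hsub ⟨(le_max_right _ _).trans_lt (h₁.trans ht), htT⟩⟩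

lemma eventually_log_sub_le (T B : ℝ) : ∀ᶠ t in 𝓝[<] T, log (T - t) ≤ B := by
  have h : Tendsto (fun t => T - t) (𝓝[<] T) (𝓝[>] 0) :=
    tendsto_nhdsWithin_of_tendsto_nhds_of_eventually_within _
      (((continuous_const.sub continuous_id).tendsto' T 0 (sub_self T)).mono_left
        nhdsWithin_le_nhds)
      (eventually_nhdsWithin_of_forall fun t (ht : t < T) => show 0 < T - t by linarith)
  exact (tendsto_log_nhdsGT_zero.comp h).eventually (eventually_le_atBot B)

theorem stmt_14 (T α : ℝ) (hT : 0 < T) (hα : 1 / 2 < α) :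
    ∃ C > 0, ∃ t₀ : ℝ, max 0 (T - 1 / Real.exp 1) < t₀ ∧ t₀ < T ∧
      ∀ t : ℝ, t₀ < t → t < T →
        (1 / (bfun T α t) ^ 2) *
            Real.sqrt (((bfun T α t) ^ 2 - 2 * normSq T (fker T α t)) ^ 2
              + 8 * normSq T (contr T (fker T α t) (fker T α t)))
          ≤ C / Real.sqrt |Real.log (T - t)| := by
  set c := |log T| + 1 / (2 * α - 1)
  set K := 4 * (1 + |log T|) / (2 * α - 1)
  have hK : 0 < K := div_pos (by positivity) (by linarith)
  have hm : max 0 (T - 1 / exp 1) < T := max_lt hT (by linarith [one_div_pos.mpr (exp_pos 1)])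
  obtain ⟨t₀, hmt₀, ht₀T, hnear⟩ := exists_forall_of_eventually_nhdsLT hm
    ((eventually_nhdsWithin_of_eventually_nhds (eventually_ge_nhds hT)).and
      (eventually_log_sub_le T (-max 1 (2 * c))))
  refine ⟨4 * √(4 * c ^ 2 + 8 * K), by positivity, t₀, hmt₀, ht₀T, fun t ht₀t htT => ?_⟩
  obtain ⟨ht0, hlog⟩ := hnear t ht₀t htT
  have hlog₁ : log (T - t) ≤ -1 := hlog.trans (neg_le_neg (le_max_left _ _))
  have hL : |log (T - t)| = -log (T - t) := abs_of_neg (by linarith)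
  exact psi_le_of_bounds (by rw [hL]; linarith) (by rw [hL]; linarith [le_max_right 1 (2 * c)])
    (abs_bfun_sub_one_le hα ht0 htT (by linarith)) (two_mul_normSq_fker hα ht0 htT)
    (normSq_contr_fker_le_div hα ht0 htT hlog₁)
end

section
/- There exists a constant C > 0, depending only on α and T, such that for all t sufficiently near T (with max(0, T − 1/e) < t < T) one has ψ₂(t) := (2/b_t²)·√( 2‖f_t ⊗₁ g_t‖ + ⟨f_t, g_t⟩² ) ≤ C/√|log(T−t)|. -/
open MeasureTheory Real Filter Topology

/-!
Everything is controlled by the kernel `K_β(x,u) = (T - max x u)^(β-1) (T - min x u)^(-β)` on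
`[0,t]²`: `f_t = K_α / (2√λ_t)` and `0 ≤ g_t ≤ K_α / |log (T-t)|`. Splitting
`∫ K_α(x,u) K_α(y,u) du` at `y ≤ x` shows that it is at most
`(2/(2α-1) + 1/δ) K_{α-δ}(x,y)`: composing the kernel with itself only costs a power `δ`.
On the diagonal `K_β(x,x) = (T-x)⁻¹`, whose integral over `[0,t]` is
`log (T/(T-t)) ≈ |log (T-t)|`. Hence `⟨f_t, g_t⟩²` and `‖f_t ⊗₁ g_t‖` are
`O(1/|log (T-t)|)`, while computing `b_t` exactly shows `b_t ≥ 1/2` near `T`.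
-/

open Set

section PowerIntegrals

variable {T x₁ x₂ : ℝ}

lemma integral_sub_rpow_s15 {p : ℝ} (hp : p ≠ -1) (h₁ : x₁ ≤ x₂) (h₂ : x₂ < T) :
    ∫ u in x₁..x₂, (T - u) ^ p = ((T - x₁) ^ (p + 1) - (T - x₂) ^ (p + 1)) / (p + 1) := by
  rw [intervalIntegral.integral_comp_sub_left (· ^ p) T,
    integral_rpow (Or.inr ⟨hp, notMem_uIcc_of_lt (by linarith) (by linarith)⟩)]

lemma integral_sub_inv (h₁ : x₁ ≤ x₂) (h₂ : x₂ < T) :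
    ∫ u in x₁..x₂, (T - u)⁻¹ = log ((T - x₁) / (T - x₂)) := by
  rw [intervalIntegral.integral_comp_sub_left (·⁻¹) T,
    integral_inv (notMem_uIcc_of_lt (by linarith) (by linarith))]

lemma integral_sub_rpow_le_of_neg_one_lt_s15 {p : ℝ} (hp : -1 < p) (h₁ : x₁ ≤ x₂)
    (h₂ : x₂ < T) :
    ∫ u in x₁..x₂, (T - u) ^ p ≤ (T - x₁) ^ (p + 1) / (p + 1) := by
  rw [integral_sub_rpow_s15 hp.ne' h₁ h₂]
  gcongr
  · linarith
  · exact sub_le_self _ (rpow_nonneg (by linarith) _)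

lemma integral_sub_rpow_le_of_lt_neg_one_s15 {p : ℝ} (hp : p < -1) (h₁ : x₁ ≤ x₂)
    (h₂ : x₂ < T) :
    ∫ u in x₁..x₂, (T - u) ^ p ≤ (T - x₂) ^ (p + 1) / -(p + 1) := by
  rw [integral_sub_rpow_s15 hp.ne h₁ h₂, ← neg_div_neg_eq, neg_sub]
  gcongr
  · linarith
  · exact sub_le_self _ (rpow_nonneg (by linarith) _)

lemma intervalIntegrable_sub_rpow_s15 (p : ℝ) (h₁ : x₁ < T) (h₂ : x₂ < T) :
    IntervalIntegrable (fun u => (T - u) ^ p) volume x₁ x₂ := by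
  refine (ContinuousOn.rpow_const (by fun_prop) fun u hu => Or.inl ?_).intervalIntegrable
  have : u ≤ max x₁ x₂ := hu.2
  have : max x₁ x₂ < T := max_lt h₁ h₂
  linarith

end PowerIntegrals

noncomputable def powKernel (T t β x u : ℝ) : ℝ :=
  if x ∈ Icc (0:ℝ) t ∧ u ∈ Icc (0:ℝ) t then
    (T - max x u) ^ (β - 1) * (T - min x u) ^ (-β)
  else 0

section PowKernel

variable {T t β x y u : ℝ}

lemma powKernel_of_mem (hx : x ∈ Icc (0:ℝ) t) (hu : u ∈ Icc (0:ℝ) t) :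
    powKernel T t β x u = (T - max x u) ^ (β - 1) * (T - min x u) ^ (-β) :=
  if_pos ⟨hx, hu⟩

lemma powKernel_of_notMem_left (hx : x ∉ Icc (0:ℝ) t) : powKernel T t β x u = 0 :=
  if_neg fun h => hx h.1

lemma powKernel_of_notMem_right (hu : u ∉ Icc (0:ℝ) t) : powKernel T t β x u = 0 :=
  if_neg fun h => hu h.2

lemma powKernel_nonneg (htT : t < T) : 0 ≤ powKernel T t β x u := by
  unfold powKernel
  split_ifs with h
  · have : max x u ≤ t := max_le h.1.2 h.2.2
    have : min x u ≤ t := (min_le_left _ _).trans h.1.2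
    exact mul_nonneg (rpow_nonneg (by linarith) _) (rpow_nonneg (by linarith) _)
  · exact le_rfl

lemma powKernel_self (htT : t < T) :
    powKernel T t β x x = (Icc (0:ℝ) t).indicator (fun x => (T - x)⁻¹) x := by
  by_cases hx : x ∈ Icc (0:ℝ) t
  · have hxT : 0 < T - x := by linarith [hx.2]
    rw [powKernel_of_mem hx hx, indicator_of_mem hx, max_self, min_self, ← rpow_add hxT,
      show β - 1 + -β = -1 by ring, rpow_neg_one]
  · rw [powKernel_of_notMem_left hx, indicator_of_notMem hx]

lemma continuousOn_powKernel (htT : t < T) : ContinuousOn (powKernel T t β x) (Icc 0 t) := by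
  by_cases hx : x ∈ Icc (0:ℝ) t
  · refine ContinuousOn.congr (f := fun u => (T - max x u) ^ (β - 1) * (T - min x u) ^ (-β))
      ?_ fun u hu => powKernel_of_mem hx hu
    have hpos : ∀ u ∈ Icc (0:ℝ) t, T - max x u ≠ 0 ∧ T - min x u ≠ 0 := fun u hu => by
      have : max x u ≤ t := max_le hx.2 hu.2
      have : min x u ≤ t := (min_le_left _ _).trans hx.2
      constructor <;> linarith
    exact ((continuousOn_const.sub (by fun_prop)).rpow_const fun u hu =>
      Or.inl (hpos u hu).1).mul ((continuousOn_const.sub (by fun_prop)).rpow_const fun u hu =>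
        Or.inl (hpos u hu).2)
  · exact continuousOn_const.congr fun u _ => powKernel_of_notMem_left hx

lemma integrableOn_powKernel_mul (htT : t < T) :
    IntegrableOn (fun u => powKernel T t β x u * powKernel T t β y u) (Icc 0 T) :=
  ((continuousOn_powKernel htT).mul (continuousOn_powKernel htT)).integrableOn_Icc
    |>.of_forall_sdiff_eq_zero measurableSet_Icc fun _ hu => by
      rw [Pi.mul_apply, powKernel_of_notMem_right hu.2, zero_mul]

end PowKernel

lemma setIntegral_Icc_eq_intervalIntegral {t T : ℝ} (ht0 : 0 ≤ t) (htT : t ≤ T)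
    {F : ℝ → ℝ} (hF : ∀ u ∉ Icc (0:ℝ) t, F u = 0) :
    ∫ u in Icc 0 T, F u = ∫ u in 0..t, F u := by
  rw [setIntegral_eq_of_subset_of_forall_sdiff_eq_zero measurableSet_Icc
      (Icc_subset_Icc le_rfl htT) fun u hu => hF u hu.2,
    integral_Icc_eq_integral_Ioc, intervalIntegral.integral_of_le ht0]

section KernelProduct

variable {T t α δ x y : ℝ}

lemma intervalIntegral_powKernel_mul_le_left (hα : 1 / 2 < α) (htT : t < T) (hy0 : 0 ≤ y)
    (hyx : y ≤ x) (hxt : x ≤ t) :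
    ∫ u in 0..y, powKernel T t α x u * powKernel T t α y u
      ≤ (T - x) ^ (α - 1) * (T - y) ^ (-α) / (2 * α - 1) := by
  have hxT : 0 < T - x := by linarith
  have hyT : 0 < T - y := by linarith
  have hEq : EqOn (fun u => powKernel T t α x u * powKernel T t α y u)
      (fun u => ((T - x) ^ (α - 1) * (T - y) ^ (α - 1)) * (T - u) ^ (-(2 * α)))
      (uIcc 0 y) := by
    intro u hu
    rw [uIcc_of_le hy0] at hu
    have hut : u ∈ Icc (0:ℝ) t := ⟨hu.1, by linarith [hu.2]⟩
    dsimp only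
    rw [powKernel_of_mem ⟨by linarith, hxt⟩ hut, powKernel_of_mem ⟨hy0, by linarith⟩ hut,
      max_eq_left (by linarith [hu.2]), min_eq_right (by linarith [hu.2]), max_eq_left hu.2,
      min_eq_right hu.2, show -(2 * α) = -α + -α by ring, rpow_add (by linarith [hu.2])]
    ring
  rw [intervalIntegral.integral_congr hEq, intervalIntegral.integral_const_mul]
  calc (T - x) ^ (α - 1) * (T - y) ^ (α - 1) * ∫ u in 0..y, (T - u) ^ (-(2 * α))
      ≤ (T - x) ^ (α - 1) * (T - y) ^ (α - 1) *
          ((T - y) ^ (-(2 * α) + 1) / -(-(2 * α) + 1)) :=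
        mul_le_mul_of_nonneg_left
          (integral_sub_rpow_le_of_lt_neg_one_s15 (by linarith) hy0 (by linarith))
          (mul_nonneg (rpow_nonneg hxT.le _) (rpow_nonneg hyT.le _))
    _ = (T - x) ^ (α - 1) * ((T - y) ^ (α - 1) * (T - y) ^ (-(2 * α) + 1)) / (2 * α - 1) := by
        ring_nf
    _ = (T - x) ^ (α - 1) * (T - y) ^ (-α) / (2 * α - 1) := by
        rw [← rpow_add hyT, show α - 1 + (-(2 * α) + 1) = -α by ring]

lemma intervalIntegral_powKernel_mul_eq_middle (htT : t < T) (hy0 : 0 ≤ y) (hyx : y ≤ x)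
    (hxt : x ≤ t) :
    ∫ u in y..x, powKernel T t α x u * powKernel T t α y u
      = (T - x) ^ (α - 1) * (T - y) ^ (-α) * log ((T - y) / (T - x)) := by
  have hEq : EqOn (fun u => powKernel T t α x u * powKernel T t α y u)
      (fun u => ((T - x) ^ (α - 1) * (T - y) ^ (-α)) * (T - u)⁻¹) (uIcc y x) := by
    intro u hu
    rw [uIcc_of_le hyx] at hu
    have hut : u ∈ Icc (0:ℝ) t := ⟨by linarith [hu.1], by linarith [hu.2]⟩
    dsimp only
    rw [powKernel_of_mem ⟨by linarith, hxt⟩ hut, powKernel_of_mem ⟨hy0, by linarith⟩ hut,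
      max_eq_left hu.2, min_eq_right hu.2, max_eq_right hu.1, min_eq_left hu.1,
      ← rpow_neg_one, show (-1 : ℝ) = -α + (α - 1) by ring, rpow_add (by linarith [hu.2])]
    ring
  rw [intervalIntegral.integral_congr hEq, intervalIntegral.integral_const_mul,
    integral_sub_inv hyx (by linarith)]

lemma intervalIntegral_powKernel_mul_le_right (hα : 1 / 2 < α) (htT : t < T) (hy0 : 0 ≤ y)
    (hyx : y ≤ x) (hxt : x ≤ t) :
    ∫ u in x..t, powKernel T t α x u * powKernel T t α y u
      ≤ (T - x) ^ (α - 1) * (T - y) ^ (-α) / (2 * α - 1) := by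
  have hxT : 0 < T - x := by linarith
  have hEq : EqOn (fun u => powKernel T t α x u * powKernel T t α y u)
      (fun u => ((T - x) ^ (-α) * (T - y) ^ (-α)) * (T - u) ^ (2 * α - 2)) (uIcc x t) := by
    intro u hu
    rw [uIcc_of_le hxt] at hu
    have hut : u ∈ Icc (0:ℝ) t := ⟨by linarith [hu.1], hu.2⟩
    dsimp only
    rw [powKernel_of_mem ⟨by linarith, hxt⟩ hut, powKernel_of_mem ⟨hy0, by linarith⟩ hut,
      max_eq_right hu.1, min_eq_left hu.1, max_eq_right (hyx.trans hu.1),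
      min_eq_left (hyx.trans hu.1), show 2 * α - 2 = (α - 1) + (α - 1) by ring,
      rpow_add (by linarith [hu.2])]
    ring
  rw [intervalIntegral.integral_congr hEq, intervalIntegral.integral_const_mul]
  calc (T - x) ^ (-α) * (T - y) ^ (-α) * ∫ u in x..t, (T - u) ^ (2 * α - 2)
      ≤ (T - x) ^ (-α) * (T - y) ^ (-α) * ((T - x) ^ (2 * α - 2 + 1) / (2 * α - 2 + 1)) :=
        mul_le_mul_of_nonneg_left (integral_sub_rpow_le_of_neg_one_lt_s15 (by linarith) hxt htT)
          (mul_nonneg (rpow_nonneg hxT.le _) (rpow_nonneg (by linarith) _))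
    _ = (T - x) ^ (-α) * (T - x) ^ (2 * α - 2 + 1) * (T - y) ^ (-α) / (2 * α - 1) := by
        ring_nf
    _ = (T - x) ^ (α - 1) * (T - y) ^ (-α) / (2 * α - 1) := by
        rw [← rpow_add hxT, show -α + (2 * α - 2 + 1) = α - 1 by ring]

/-- With `a = T - x ≤ b = T - y`, the three pieces are at most `a^(α-1) b^(-α)` times
`1/(2α-1)`, `log (b/a) ≤ (b/a)^δ/δ` and `1/(2α-1)`; the factor `(b/a)^δ ≥ 1` turns the
kernel of exponent `α` into the one of exponent `α - δ`. -/
lemma intervalIntegral_powKernel_mul_le (hα : 1 / 2 < α) (hδ : 0 < δ) (htT : t < T)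
    (hy0 : 0 ≤ y) (hyx : y ≤ x) (hxt : x ≤ t) :
    ∫ u in 0..t, powKernel T t α x u * powKernel T t α y u
      ≤ (2 / (2 * α - 1) + 1 / δ) * ((T - x) ^ (α - δ - 1) * (T - y) ^ (-(α - δ))) := by
  have hxT : 0 < T - x := by linarith
  have hyT : 0 < T - y := by linarith
  have hint : ∀ a b, a ∈ Icc 0 t → b ∈ Icc 0 t →
      IntervalIntegrable (fun u => powKernel T t α x u * powKernel T t α y u) volume a b :=
    fun a b ha hb => (((continuousOn_powKernel htT).mul (continuousOn_powKernel htT)).mono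
      (uIcc_subset_Icc ha hb)).intervalIntegrable
  have h0 : (0:ℝ) ∈ Icc 0 t := ⟨le_rfl, by linarith⟩
  have hy : y ∈ Icc 0 t := ⟨hy0, by linarith⟩
  have hx : x ∈ Icc 0 t := ⟨by linarith, hxt⟩
  have ht : t ∈ Icc 0 t := ⟨by linarith, le_rfl⟩
  rw [← intervalIntegral.integral_add_adjacent_intervals (hint 0 x h0 hx) (hint x t hx ht),
    ← intervalIntegral.integral_add_adjacent_intervals (hint 0 y h0 hy) (hint y x hy hx),
    intervalIntegral_powKernel_mul_eq_middle htT hy0 hyx hxt]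
  have hPr : (T - x) ^ (α - δ - 1) * (T - y) ^ (-(α - δ))
      = (T - x) ^ (α - 1) * (T - y) ^ (-α) * ((T - y) / (T - x)) ^ δ := by
    rw [div_rpow hyT.le hxT.le, show α - δ - 1 = α - 1 - δ by ring, rpow_sub hxT,
      show -(α - δ) = -α + δ by ring, rpow_add hyT]
    ring
  set P := (T - x) ^ (α - 1) * (T - y) ^ (-α)
  set r := ((T - y) / (T - x)) ^ δ
  have hP : 0 ≤ P := mul_nonneg (rpow_nonneg hxT.le _) (rpow_nonneg hyT.le _)
  have hr : 1 ≤ r := one_le_rpow ((one_le_div hxT).2 (by linarith)) hδ.le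
  have hlog : log ((T - y) / (T - x)) ≤ r / δ := log_le_rpow_div (by positivity) hδ
  have h2α : 0 < 2 * α - 1 := by linarith
  calc _ ≤ P / (2 * α - 1) + P * (r / δ) + P / (2 * α - 1) := by
        gcongr
        · exact intervalIntegral_powKernel_mul_le_left hα htT hy0 hyx hxt
        · exact intervalIntegral_powKernel_mul_le_right hα htT hy0 hyx hxt
    _ ≤ P * r / (2 * α - 1) + P * (r / δ) + P * r / (2 * α - 1) := by
        gcongr <;> exact le_mul_of_one_le_right hP hr
    _ = _ := by rw [hPr]; ring

lemma integral_powKernel_mul_le (hα : 1 / 2 < α) (hδ : 0 < δ) (htT : t < T) (x y : ℝ) :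
    ∫ u in Icc 0 T, powKernel T t α x u * powKernel T t α y u
      ≤ (2 / (2 * α - 1) + 1 / δ) * powKernel T t (α - δ) x y := by
  by_cases hx : x ∈ Icc (0:ℝ) t
  · by_cases hy : y ∈ Icc (0:ℝ) t
    · rw [setIntegral_Icc_eq_intervalIntegral (hx.1.trans hx.2) htT.le fun u hu => by
        rw [powKernel_of_notMem_right hu, zero_mul], powKernel_of_mem hx hy]
      rcases le_total y x with hyx | hxy
      · rw [max_eq_left hyx, min_eq_right hyx]
        exact intervalIntegral_powKernel_mul_le hα hδ htT hy.1 hyx hx.2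
      · simp_rw [mul_comm (powKernel T t α x _)]
        rw [max_eq_right hxy, min_eq_left hxy]
        exact intervalIntegral_powKernel_mul_le hα hδ htT hx.1 hxy hy.2
    · simp [powKernel_of_notMem_left hy, powKernel_of_notMem_right hy]
  · simp [powKernel_of_notMem_left hx]

end KernelProduct

lemma setIntegral_le_mul_setIntegral {X : Type*} [MeasurableSpace X] {μ : Measure X}
    {s : Set X} {F G : X → ℝ} {c : ℝ} (hF : ∀ v, 0 ≤ F v) (hFG : ∀ v, F v ≤ c * G v)
    (hG : IntegrableOn G s μ) :
    ∫ v in s, F v ∂μ ≤ c * ∫ v in s, G v ∂μ := by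
  rw [← integral_const_mul]
  exact integral_mono_of_nonneg (.of_forall hF) (hG.const_mul c) (.of_forall hFG)

lemma setIntegral_setIntegral_le_mul_log {T t c : ℝ} (ht0 : 0 ≤ t) (htT : t < T)
    {H : ℝ → ℝ → ℝ} (hH : ∀ u v, 0 ≤ H u v)
    (hbound : ∀ u,
      ∫ v in Icc 0 T, H u v ≤ c * (Icc (0:ℝ) t).indicator (fun x => (T - x)⁻¹) u) :
    ∫ u in Icc 0 T, ∫ v in Icc 0 T, H u v ≤ c * log (T / (T - t)) := by
  have hcont : ContinuousOn (fun x => (T - x)⁻¹) (Icc 0 t) :=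
    ContinuousOn.inv₀ (by fun_prop) fun x hx => sub_ne_zero.2 (by linarith [hx.2])
  have hvanish : ∀ u ∉ Icc (0:ℝ) t, (Icc (0:ℝ) t).indicator (fun x => (T - x)⁻¹) u = 0 :=
    fun _ hu => indicator_of_notMem hu _
  have hint : IntegrableOn ((Icc (0:ℝ) t).indicator fun x => (T - x)⁻¹) (Icc 0 T) :=
    (hcont.integrableOn_Icc.congr_fun
      (fun _ hu => (indicator_of_mem hu (fun x => (T - x)⁻¹)).symm) measurableSet_Icc)
      |>.of_forall_sdiff_eq_zero measurableSet_Icc fun u hu => hvanish u hu.2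
  refine (setIntegral_le_mul_setIntegral (fun u => setIntegral_nonneg measurableSet_Icc
    fun v _ => hH u v) hbound hint).trans_eq ?_
  rw [setIntegral_Icc_eq_intervalIntegral ht0 htT.le hvanish,
    intervalIntegral.integral_congr fun u hu => indicator_of_mem (uIcc_of_le ht0 ▸ hu) _,
    integral_sub_inv ht0 htT, sub_zero]

noncomputable def kernelScale (T α t : ℝ) : ℝ := 1 / (2 * √(lam T α t) * |log (T - t)|)

section Kernels

variable {T α t : ℝ}

lemma kernelScale_nonneg : 0 ≤ kernelScale T α t := by
  unfold kernelScale; positivity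

lemma fker_eq_mul_powKernel (x u : ℝ) :
    fker T α t x u = 1 / (2 * √(lam T α t)) * powKernel T t α x u := by
  unfold fker powKernel
  split_ifs <;> ring

lemma gker_nonneg (hα : 1 / 2 < α) (htT : t < T) (y u : ℝ) : 0 ≤ gker T α t y u := by
  unfold gker
  split_ifs with h
  · have : max y u ≤ t := max_le h.1.2 h.2.2
    have : (T - t) ^ (2 * α - 1) ≤ (T - max y u) ^ (2 * α - 1) :=
      rpow_le_rpow (by linarith) (by linarith) (by linarith)
    have : 0 ≤ (T - y) ^ (-α) * (T - u) ^ (-α) :=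
      mul_nonneg (rpow_nonneg (by linarith [h.1.2]) _) (rpow_nonneg (by linarith [h.2.2]) _)
    positivity
  · exact le_rfl

lemma gker_le_powKernel (htT : t < T) (y u : ℝ) :
    gker T α t y u ≤ powKernel T t α y u / |log (T - t)| := by
  unfold gker powKernel
  split_ifs with h
  · refine div_le_div_of_nonneg_right ?_ (abs_nonneg _)
    have hM : 0 < T - max y u := by linarith [max_le h.1.2 h.2.2]
    have hm : 0 < T - min y u := by linarith [(min_le_left y u).trans h.1.2]
    have hprod :
        (T - y) ^ (-α) * (T - u) ^ (-α) = (T - max y u) ^ (-α) * (T - min y u) ^ (-α) := by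
      rcases le_total y u with h' | h'
      · rw [max_eq_right h', min_eq_left h', mul_comm]
      · rw [max_eq_left h', min_eq_right h']
    calc (T - y) ^ (-α) * (T - u) ^ (-α) * ((T - max y u) ^ (2 * α - 1) - (T - t) ^ (2 * α - 1))
        ≤ (T - max y u) ^ (-α) * (T - min y u) ^ (-α) * (T - max y u) ^ (2 * α - 1) := by
          rw [hprod]
          exact mul_le_mul_of_nonneg_left (sub_le_self _ (rpow_nonneg (by linarith) _))
            (mul_nonneg (rpow_nonneg hM.le _) (rpow_nonneg hm.le _))
      _ = (T - max y u) ^ (α - 1) * (T - min y u) ^ (-α) := by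
          rw [mul_right_comm, ← rpow_add hM, show -α + (2 * α - 1) = α - 1 by ring]
  · simp

lemma fker_mul_gker_le (htT : t < T) (x y u : ℝ) :
    fker T α t x u * gker T α t y u
      ≤ kernelScale T α t * (powKernel T t α x u * powKernel T t α y u) := by
  rw [fker_eq_mul_powKernel]
  calc 1 / (2 * √(lam T α t)) * powKernel T t α x u * gker T α t y u
      ≤ 1 / (2 * √(lam T α t)) * powKernel T t α x u *
          (powKernel T t α y u / |log (T - t)|) :=
        mul_le_mul_of_nonneg_left (gker_le_powKernel htT y u)
          (mul_nonneg (by positivity) (powKernel_nonneg htT))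
    _ = _ := by unfold kernelScale; ring

lemma fker_mul_gker_nonneg (hα : 1 / 2 < α) (htT : t < T) (x y u : ℝ) :
    0 ≤ fker T α t x u * gker T α t y u := by
  rw [fker_eq_mul_powKernel]
  exact mul_nonneg (mul_nonneg (by positivity) (powKernel_nonneg htT)) (gker_nonneg hα htT y u)

lemma contr_fker_gker_nonneg (hα : 1 / 2 < α) (htT : t < T) (x y : ℝ) :
    0 ≤ contr T (fker T α t) (gker T α t) x y :=
  setIntegral_nonneg measurableSet_Icc fun u _ => fker_mul_gker_nonneg hα htT x y u

lemma contr_fker_gker_le {δ : ℝ} (hα : 1 / 2 < α) (hδ : 0 < δ) (htT : t < T) (x y : ℝ) :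
    contr T (fker T α t) (gker T α t) x y
      ≤ kernelScale T α t * (2 / (2 * α - 1) + 1 / δ) * powKernel T t (α - δ) x y := by
  rw [mul_assoc]
  exact (setIntegral_le_mul_setIntegral (fker_mul_gker_nonneg hα htT x y)
    (fker_mul_gker_le htT x y) (integrableOn_powKernel_mul htT)).trans
    (mul_le_mul_of_nonneg_left (integral_powKernel_mul_le hα hδ htT x y) kernelScale_nonneg)

lemma ip_fker_gker_nonneg (hα : 1 / 2 < α) (htT : t < T) :
    0 ≤ ip T (fker T α t) (gker T α t) :=
  setIntegral_nonneg measurableSet_Icc fun u _ => setIntegral_nonneg measurableSet_Icc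
    fun v _ => fker_mul_gker_nonneg hα htT u u v

lemma ip_fker_gker_le {δ : ℝ} (hα : 1 / 2 < α) (hδ : 0 < δ) (ht0 : 0 ≤ t) (htT : t < T) :
    ip T (fker T α t) (gker T α t)
      ≤ kernelScale T α t * (2 / (2 * α - 1) + 1 / δ) * log (T / (T - t)) := by
  refine setIntegral_setIntegral_le_mul_log ht0 htT
    (fun u v => fker_mul_gker_nonneg hα htT u u v) fun u => ?_
  rw [mul_assoc, ← powKernel_self (β := α - δ) htT]
  exact (setIntegral_le_mul_setIntegral (fker_mul_gker_nonneg hα htT u u)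
    (fker_mul_gker_le htT u u) (integrableOn_powKernel_mul htT)).trans
    (mul_le_mul_of_nonneg_left (integral_powKernel_mul_le hα hδ htT u u) kernelScale_nonneg)

lemma normSq_contr_fker_gker_le {δ : ℝ} (hα : 1 / 2 < α) (hδ : 0 < δ)
    (hδα : δ < α - 1 / 2) (ht0 : 0 ≤ t) (htT : t < T) :
    normSq T (contr T (fker T α t) (gker T α t))
      ≤ (kernelScale T α t * (2 / (2 * α - 1) + 1 / δ)) ^ 2 *
        (2 / (2 * (α - δ) - 1) + 1 / δ) * log (T / (T - t)) := by
  set Q := kernelScale T α t * (2 / (2 * α - 1) + 1 / δ)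
  have h2α : 0 < 2 * α - 1 := by linarith
  have hQ : 0 ≤ Q := mul_nonneg kernelScale_nonneg (by positivity)
  have hpt : ∀ u v,
      contr T (fker T α t) (gker T α t) u v * contr T (fker T α t) (gker T α t) u v
      ≤ Q ^ 2 * (powKernel T t (α - δ) u v * powKernel T t (α - δ) u v) := fun u v => by
    have h := contr_fker_gker_le hα hδ htT u v
    exact (mul_le_mul h h (contr_fker_gker_nonneg hα htT u v)
      (mul_nonneg hQ (powKernel_nonneg htT))).trans_eq (by ring)
  refine setIntegral_setIntegral_le_mul_log ht0 htT (fun u v => mul_self_nonneg _) fun u => ?_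
  rw [mul_assoc, ← powKernel_self (β := α - δ - δ) htT]
  exact (setIntegral_le_mul_setIntegral (fun v => mul_self_nonneg _) (hpt u)
    (integrableOn_powKernel_mul htT)).trans (mul_le_mul_of_nonneg_left
      (integral_powKernel_mul_le (by linarith) hδ htT u u) (sq_nonneg Q))

end Kernels

lemma intervalIntegral_bfun_inner {T α s : ℝ} (hα : 1 / 2 < α) (hs0 : 0 ≤ s) (hsT : s < T) :
    ∫ u in 0..s, (T - s) ^ (2 * α - 2) * (T - u) ^ (-(2 * α))
      = ((T - s)⁻¹ - T ^ (1 - 2 * α) * (T - s) ^ (2 * α - 2)) / (2 * α - 1) := by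
  have hlin : ∀ A B C : ℝ, A * ((B - C) / (1 - 2 * α)) = (A * C - B * A) / (2 * α - 1) :=
    fun A B C => by rw [show 1 - 2 * α = -(2 * α - 1) by ring, div_neg]; ring
  have hexp : (T - s) ^ (2 * α - 2) * (T - s) ^ (1 - 2 * α) = (T - s)⁻¹ := by
    rw [← rpow_add (by linarith), ← rpow_neg_one]; ring_nf
  rw [intervalIntegral.integral_const_mul, integral_sub_rpow_s15 (by linarith) hs0 hsT, sub_zero,
    show -(2 * α) + 1 = 1 - 2 * α by ring, hlin, hexp]

lemma le_bfun {T α t : ℝ} (hα : 1 / 2 < α) (ht0 : 0 ≤ t) (htT : t < T) :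
    (log (T / (T - t)) - 1 / (2 * α - 1)) / |log (T - t)| ≤ bfun T α t := by
  have hT : 0 < T := by linarith
  have h2α : 0 < 2 * α - 1 := by linarith
  have hinner : EqOn (fun s => ∫ u in 0..s, (T - s) ^ (2 * α - 2) * (T - u) ^ (-(2 * α)))
      (fun s => ((T - s)⁻¹ - T ^ (1 - 2 * α) * (T - s) ^ (2 * α - 2)) / (2 * α - 1))
      (uIcc 0 t) := fun s hs => by
    rw [uIcc_of_le ht0] at hs
    exact intervalIntegral_bfun_inner hα hs.1 (by linarith [hs.2])
  have hinv : IntervalIntegrable (fun s => (T - s)⁻¹) volume 0 t :=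
    intervalIntegral.intervalIntegrable_inv
      (fun s hs => sub_ne_zero.2 (by linarith [(uIcc_of_le ht0 ▸ hs).2])) (by fun_prop)
  have hpow : T ^ (1 - 2 * α) * ∫ s in 0..t, (T - s) ^ (2 * α - 2) ≤ 1 / (2 * α - 1) := by
    calc T ^ (1 - 2 * α) * ∫ s in 0..t, (T - s) ^ (2 * α - 2)
        ≤ T ^ (1 - 2 * α) * ((T - 0) ^ (2 * α - 2 + 1) / (2 * α - 2 + 1)) :=
          mul_le_mul_of_nonneg_left (integral_sub_rpow_le_of_neg_one_lt_s15 (by linarith) ht0 htT)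
            (rpow_nonneg hT.le _)
      _ = 1 / (2 * α - 1) := by
          rw [sub_zero, mul_div_assoc', ← rpow_add hT,
            show 1 - 2 * α + (2 * α - 2 + 1) = 0 by ring, rpow_zero,
            show 2 * α - 2 + 1 = 2 * α - 1 by ring]
  unfold bfun lam
  rw [intervalIntegral.integral_congr hinner, intervalIntegral.integral_div,
    intervalIntegral.integral_sub hinv
      ((intervalIntegrable_sub_rpow_s15 _ (by linarith) htT).const_mul _),
    integral_sub_inv ht0 htT, sub_zero, intervalIntegral.integral_const_mul]
  calc (log (T / (T - t)) - 1 / (2 * α - 1)) / |log (T - t)|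
      = 1 / (|log (T - t)| / (2 * α - 1)) *
          ((log (T / (T - t)) - 1 / (2 * α - 1)) / (2 * α - 1)) := by
        rw [one_div_div, div_mul_div_comm, mul_comm (2 * α - 1), mul_div_mul_right _ _ h2α.ne']
    _ ≤ _ := by gcongr

section Asymptotics

variable {T α t : ℝ}

lemma kernelScale_sq (hα : 1 / 2 < α) :
    kernelScale T α t ^ 2 = (2 * α - 1) / (4 * |log (T - t)| ^ 3) := by
  have h2α : 0 < 2 * α - 1 := by linarith
  unfold kernelScale lam
  rw [div_pow, mul_pow, mul_pow, sq_sqrt (by positivity)]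
  field_simp
  ring

lemma sq_ip_fker_gker_le (hα : 1 / 2 < α) (ht0 : 0 ≤ t) (htT : t < T)
    (hupper : log (T / (T - t)) ≤ 2 * |log (T - t)|) (hL : 0 < |log (T - t)|) :
    ip T (fker T α t) (gker T α t) ^ 2 ≤ 36 / ((2 * α - 1) * |log (T - t)|) := by
  have h2α : 0 < 2 * α - 1 := by linarith
  have hℓ : 0 ≤ log (T / (T - t)) := log_nonneg ((one_le_div (by linarith)).2 (by linarith))
  have hI := ip_fker_gker_le (δ := (2 * α - 1) / 4) hα (by positivity) ht0 htT
  rw [show 2 / (2 * α - 1) + 1 / ((2 * α - 1) / 4) = 6 / (2 * α - 1) by field_simp; ring] at hI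
  calc ip T (fker T α t) (gker T α t) ^ 2
      ≤ (kernelScale T α t * (6 / (2 * α - 1)) * log (T / (T - t))) ^ 2 :=
        pow_le_pow_left₀ (ip_fker_gker_nonneg hα htT) hI 2
    _ = kernelScale T α t ^ 2 * (6 / (2 * α - 1)) ^ 2 * log (T / (T - t)) ^ 2 := by ring
    _ ≤ kernelScale T α t ^ 2 * (6 / (2 * α - 1)) ^ 2 * (2 * |log (T - t)|) ^ 2 := by gcongr
    _ = 36 / ((2 * α - 1) * |log (T - t)|) := by rw [kernelScale_sq hα]; field_simp; ring

lemma sqrt_normSq_contr_fker_gker_le (hα : 1 / 2 < α) (ht0 : 0 ≤ t) (htT : t < T)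
    (hupper : log (T / (T - t)) ≤ 2 * |log (T - t)|) (hL : 0 < |log (T - t)|) :
    √(normSq T (contr T (fker T α t) (gker T α t)))
      ≤ 12 / ((2 * α - 1) * |log (T - t)|) := by
  have h2α : 0 < 2 * α - 1 := by linarith
  have hN := normSq_contr_fker_gker_le (δ := (2 * α - 1) / 4) hα (by positivity) (by linarith)
    ht0 htT
  rw [show 2 * (α - (2 * α - 1) / 4) - 1 = (2 * α - 1) / 2 by ring,
    show 2 / ((2 * α - 1) / 2) + 1 / ((2 * α - 1) / 4) = 8 / (2 * α - 1) by field_simp; ring,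
    show 2 / (2 * α - 1) + 1 / ((2 * α - 1) / 4) = 6 / (2 * α - 1) by field_simp; ring] at hN
  rw [sqrt_le_left (by positivity)]
  calc normSq T (contr T (fker T α t) (gker T α t))
      ≤ kernelScale T α t ^ 2 * ((6 / (2 * α - 1)) ^ 2 * (8 / (2 * α - 1))) *
          log (T / (T - t)) := hN.trans_eq (by ring)
    _ ≤ kernelScale T α t ^ 2 * ((6 / (2 * α - 1)) ^ 2 * (8 / (2 * α - 1))) *
          (2 * |log (T - t)|) := by gcongr
    _ = (12 / ((2 * α - 1) * |log (T - t)|)) ^ 2 := by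
        rw [kernelScale_sq hα]; field_simp; ring

noncomputable def psi₂ (T α t : ℝ) : ℝ :=
  (2 / (bfun T α t) ^ 2) *
    √(2 * √(normSq T (contr T (fker T α t) (gker T α t)))
      + (ip T (fker T α t) (gker T α t)) ^ 2)

lemma psi₂_le (hα : 1 / 2 < α) (ht0 : 0 ≤ t) (htT : t < T)
    (hupper : log (T / (T - t)) ≤ 2 * |log (T - t)|)
    (hlower : |log (T - t)| / 2 + 1 / (2 * α - 1) ≤ log (T / (T - t))) :
    psi₂ T α t ≤ 8 * √(60 / (2 * α - 1)) / √|log (T - t)| := by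
  have hL : 0 < |log (T - t)| := by
    have : 0 < 1 / (2 * α - 1) := one_div_pos.2 (by linarith)
    linarith
  have hb : 1 / 2 ≤ bfun T α t :=
    le_trans (by rw [le_div_iff₀ hL]; linarith) (le_bfun hα ht0 htT)
  have hfrac : 2 / bfun T α t ^ 2 ≤ 8 := by
    rw [div_le_iff₀ (by positivity)]
    nlinarith
  have hsum : 2 * √(normSq T (contr T (fker T α t) (gker T α t)))
      + ip T (fker T α t) (gker T α t) ^ 2 ≤ 60 / ((2 * α - 1) * |log (T - t)|) := by
    have := sqrt_normSq_contr_fker_gker_le hα ht0 htT hupper hL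
    have := sq_ip_fker_gker_le hα ht0 htT hupper hL
    rw [show (60 : ℝ) = 2 * 12 + 36 by norm_num, add_div, mul_div_assoc]
    linarith
  calc psi₂ T α t ≤ 8 * √(60 / ((2 * α - 1) * |log (T - t)|)) :=
        mul_le_mul hfrac (sqrt_le_sqrt hsum) (sqrt_nonneg _) (by norm_num)
    _ = 8 * √(60 / (2 * α - 1)) / √|log (T - t)| := by
        rw [← div_div, sqrt_div' _ hL.le, mul_div_assoc]

end Asymptotics

theorem stmt_15 (T α : ℝ) (hT : 0 < T) (hα : 1 / 2 < α) :
    ∃ C > 0, ∃ t₀ : ℝ, max 0 (T - 1 / Real.exp 1) < t₀ ∧ t₀ < T ∧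
      ∀ t : ℝ, t₀ < t → t < T →
        (2 / (bfun T α t) ^ 2) *
            Real.sqrt (2 * Real.sqrt (normSq T (contr T (fker T α t) (gker T α t)))
              + (ip T (fker T α t) (gker T α t)) ^ 2)
          ≤ C / Real.sqrt |Real.log (T - t)| := by
  have hγ : 0 < 1 / (2 * α - 1) := div_pos one_pos (by linarith)
  -- once `|log (T-t)| > R`, both hypotheses of `psi₂_le` hold
  set R := 2 * |log T| + 2 * (1 / (2 * α - 1)) + 1 with hR
  have hRT : exp (-R) < T := by
    rw [← exp_log hT, exp_lt_exp]
    linarith [neg_abs_le (log T), abs_nonneg (log T)]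
  have hRe : exp (-R) < 1 / exp 1 := by
    rw [one_div, ← exp_neg, exp_lt_exp]
    linarith [abs_nonneg (log T)]
  refine ⟨8 * √(60 / (2 * α - 1)),
    mul_pos (by norm_num) (sqrt_pos.2 (div_pos (by norm_num) (by linarith))), T - exp (-R),
    max_lt (by linarith) (by linarith), by linarith [exp_pos (-R)],
    fun t ht₀ htT => ?_⟩
  have hlog : log (T - t) < -R := (log_lt_iff_lt_exp (by linarith)).2 (by linarith)
  have hL : |log (T - t)| = -log (T - t) := abs_of_neg (by linarith [abs_nonneg (log T)])
  have hℓ : log (T / (T - t)) = log T - log (T - t) := log_div hT.ne' (by linarith)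
  exact psi₂_le hα (by linarith) htT (by linarith [le_abs_self (log T), abs_nonneg (log T)])
    (by linarith [neg_abs_le (log T)])
end

section
/- There exist a constant c > 0, depending only on α and T, and t₀ with max(0, T − 1/e) < t₀ < T, such that for all t with t₀ < t < T one has |⟨f_t ⊗₁ f_t, f_t⟩| ≥ c/√|log(T−t)|. -/
open MeasureTheory Real Filter Topology

/-!
All kernels involved are nonnegative, so `⟨f_t ⊗₁ f_t, f_t⟩` is bounded below by its part over
`u ∈ [T - δ, t]`, `T - v ∈ [3(T - u)/2, 2(T - u)]`. Writing `s = 1/(2√λ_t)`, for `v ≤ w ≤ u` one has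
`f_t(u,w) f_t(v,w) = s² (T-u)^{α-1} (T-v)^{-α} / (T-w)`, and
`(T-u)^{α-1} (T-v)^{-α} ≥ 2^{-α}/(T-u)`.
Hence `(f_t ⊗₁ f_t)(u,v) f_t(u,v) ≳ s³/(T-u)²`; integrating over `v` gives `≳ s³/(T-u)`, and over
`u` gives `≳ s³ log(δ/(T-t)) ≳ s³ |log(T-t)|`, which is of order `|log(T-t)|^{-1/2}`.
-/

open Set

def IsBoundedKernel {X Y : Type*} [MeasurableSpace X] [MeasurableSpace Y] (p : X → Y → ℝ) :
    Prop :=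
  Measurable (Function.uncurry p) ∧ ∃ C, ∀ x y, |p x y| ≤ C

lemma integrableOn_Icc_of_abs_le {g : ℝ → ℝ} {C : ℝ} (hg : Measurable g) (hC : ∀ x, |g x| ≤ C)
    (a b : ℝ) : IntegrableOn g (Icc a b) :=
  Measure.integrableOn_of_bounded measure_Icc_lt_top.ne hg.aestronglyMeasurable
    (ae_of_all _ fun x => (norm_eq_abs (g x)).trans_le (hC x))

lemma abs_setIntegral_Icc_le {g : ℝ → ℝ} {C a b : ℝ} (hC : ∀ x, |g x| ≤ C) :
    |∫ x in Icc a b, g x| ≤ C * volume.real (Icc a b) :=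
  (norm_eq_abs _).symm.trans_le <| norm_setIntegral_le_of_norm_le_const measure_Icc_lt_top
    fun x _ => (norm_eq_abs _).trans_le (hC x)

lemma mul_sub_le_setIntegral {g : ℝ → ℝ} {S : Set ℝ} {a b c : ℝ} (hab : a ≤ b)
    (hS : Icc a b ⊆ S) (hg : IntegrableOn g S) (hg0 : 0 ≤ g) (hc : ∀ x ∈ Icc a b, c ≤ g x) :
    c * (b - a) ≤ ∫ x in S, g x :=
  calc c * (b - a) = volume.real (Icc a b) • c := by
        rw [measureReal_def, Real.volume_Icc, ENNReal.toReal_ofReal (sub_nonneg.2 hab),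
          smul_eq_mul, mul_comm]
    _ ≤ ∫ x in Icc a b, g x :=
        setIntegral_ge_of_const_le measurableSet_Icc measure_Icc_lt_top.ne hc (hg.mono_set hS)
    _ ≤ ∫ x in S, g x := setIntegral_mono_set hg (ae_of_all _ hg0) hS.eventuallyLE

lemma contr_nonneg {T : ℝ} {p q : ℝ → ℝ → ℝ} (hp : 0 ≤ p) (hq : 0 ≤ q) (x y : ℝ) :
    0 ≤ contr T p q x y :=
  integral_nonneg fun u => mul_nonneg (hp x u) (hq y u)

namespace IsBoundedKernel

variable {X : Type*} [MeasurableSpace X] {p q : X → ℝ → ℝ}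

lemma integrableOn (hp : IsBoundedKernel p) (x : X) (a b : ℝ) : IntegrableOn (p x) (Icc a b) := by
  obtain ⟨hm, C, hC⟩ := hp
  exact integrableOn_Icc_of_abs_le (hm.comp measurable_prodMk_left) (hC x) a b

lemma mul (hp : IsBoundedKernel p) (hq : IsBoundedKernel q) :
    IsBoundedKernel fun x y => p x y * q x y := by
  obtain ⟨hpm, C, hC⟩ := hp
  obtain ⟨hqm, D, hD⟩ := hq
  refine ⟨hpm.mul hqm, C * D, fun x y => ?_⟩
  rw [abs_mul]
  exact mul_le_mul (hC x y) (hD x y) (abs_nonneg _) ((abs_nonneg _).trans (hC x y))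

lemma measurable_setIntegral (hp : IsBoundedKernel p) (a b : ℝ) :
    Measurable fun x => ∫ y in Icc a b, p x y :=
  (hp.1.stronglyMeasurable.integral_prod_right' (ν := volume.restrict (Icc a b))).measurable

lemma integrableOn_setIntegral {p : ℝ → ℝ → ℝ} (hp : IsBoundedKernel p) (a b c d : ℝ) :
    IntegrableOn (fun x => ∫ y in Icc a b, p x y) (Icc c d) := by
  obtain ⟨C, hC⟩ := hp.2
  exact integrableOn_Icc_of_abs_le (hp.measurable_setIntegral a b)
    (fun x => abs_setIntegral_Icc_le (hC x)) c d

lemma prodMul {Y : Type*} [MeasurableSpace Y] {q : Y → ℝ → ℝ} (hp : IsBoundedKernel p)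
    (hq : IsBoundedKernel q) : IsBoundedKernel fun (z : X × Y) u => p z.1 u * q z.2 u :=
  IsBoundedKernel.mul
    ⟨hp.1.comp (measurable_fst.fst.prodMk measurable_snd), hp.2.imp fun _ h z => h z.1⟩
    ⟨hq.1.comp (measurable_fst.snd.prodMk measurable_snd), hq.2.imp fun _ h z => h z.2⟩

lemma contr {p q : ℝ → ℝ → ℝ} (T : ℝ) (hp : IsBoundedKernel p) (hq : IsBoundedKernel q) :
    IsBoundedKernel (_root_.contr T p q) := by
  obtain ⟨C, hC⟩ := (hp.prodMul hq).2
  exact ⟨(hp.prodMul hq).measurable_setIntegral 0 T, _,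
    fun x y => abs_setIntegral_Icc_le (hC (x, y))⟩

end IsBoundedKernel

lemma inv_le_rpow_mul_rpow_neg {α b x : ℝ} (hα : 0 ≤ α) (hb : 0 < b) (hx : 0 < x)
    (hxb : x ≤ 2 * b) : 2 ^ (-α) * b⁻¹ ≤ b ^ (α - 1) * x ^ (-α) :=
  calc 2 ^ (-α) * b⁻¹ = b ^ (α - 1) * (2 * b) ^ (-α) := by
        rw [mul_rpow zero_le_two hb.le, mul_left_comm, ← rpow_add hb,
          show α - 1 + -α = -1 by ring, rpow_neg_one]
    _ ≤ b ^ (α - 1) * x ^ (-α) :=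
        mul_le_mul_of_nonneg_left (rpow_le_rpow_of_nonpos hx hxb (neg_nonpos.2 hα))
          (rpow_nonneg hb.le _)

noncomputable def fkerScale (T α t : ℝ) : ℝ := 1 / (2 * √(lam T α t))

lemma fkerScale_nonneg (T α t : ℝ) : 0 ≤ fkerScale T α t := by
  unfold fkerScale
  positivity

section fker

variable {T α t : ℝ}

lemma fker_comm (u v : ℝ) : fker T α t u v = fker T α t v u := by
  simp only [fker, max_comm u v, min_comm u v, and_comm]

lemma fker_of_le {u v : ℝ} (hv : 0 ≤ v) (hvu : v ≤ u) (hu : u ≤ t) :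
    fker T α t u v = fkerScale T α t * ((T - u) ^ (α - 1) * (T - v) ^ (-α)) := by
  rw [fker, if_pos ⟨⟨hv.trans hvu, hu⟩, hv, hvu.trans hu⟩, max_eq_left hvu, min_eq_right hvu,
    fkerScale, mul_assoc]

lemma fker_nonneg (ht : t ≤ T) : 0 ≤ fker T α t := by
  intro u v
  rw [fker]
  split_ifs with h
  · have hmax : 0 ≤ T - max u v := by linarith [max_le h.1.2 h.2.2]
    have hmin : 0 ≤ T - min u v := by linarith [min_le_left u v, h.1.2]
    have := rpow_nonneg hmax (α - 1)
    have := rpow_nonneg hmin (-α)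
    positivity
  · exact le_rfl

lemma isBoundedKernel_fker (ht : t < T) : IsBoundedKernel (fker T α t) := by
  have hbox : IsCompact (Icc (0 : ℝ) t ×ˢ Icc (0 : ℝ) t) := isCompact_Icc.prod isCompact_Icc
  have hcont : ContinuousOn (fun z : ℝ × ℝ => 1 / (2 * √(lam T α t)) *
      (T - max z.1 z.2) ^ (α - 1) * (T - min z.1 z.2) ^ (-α)) (Icc 0 t ×ˢ Icc 0 t) := by
    refine (continuousOn_const.mul (ContinuousOn.rpow_const (by fun_prop) fun z hz => ?_)).mul
      (ContinuousOn.rpow_const (by fun_prop) fun z hz => ?_) <;>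
    · left
      linarith [max_le hz.1.2 hz.2.2, min_le_left z.1 z.2, hz.1.2]
  obtain ⟨C, hC⟩ := hbox.exists_bound_of_continuousOn hcont
  refine ⟨?_, max C 0, fun u v => ?_⟩
  · exact Measurable.ite (measurableSet_Icc.prod measurableSet_Icc) (by fun_prop) measurable_const
  · rw [fker]
    split_ifs with h
    · exact le_max_of_le_left ((norm_eq_abs _).symm.trans_le (hC (u, v) h))
    · simp

lemma contr_fker_ge (ht : t < T) {u v : ℝ} (hv : 0 ≤ v) (hvu : v ≤ u) (hu : u ≤ t) :
    fkerScale T α t ^ 2 * ((T - u) ^ (α - 1) * (T - v) ^ (-α)) * (T - v)⁻¹ * (u - v) ≤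
      contr T (fker T α t) (fker T α t) u v := by
  have hf := isBoundedKernel_fker (α := α) ht
  refine mul_sub_le_setIntegral hvu (Icc_subset_Icc hv (by linarith))
    ((hf.prodMul hf).integrableOn (u, v) 0 T)
    (fun w => mul_nonneg (fker_nonneg ht.le u w) (fker_nonneg ht.le v w)) fun w hw => ?_
  have hTw : 0 < T - w := by linarith [hw.2]
  have hw_pow : (T - w) ^ (-α) * (T - w) ^ (α - 1) = (T - w)⁻¹ := by
    rw [← rpow_add hTw, show -α + (α - 1) = -1 by ring, rpow_neg_one]
  have hX : 0 ≤ (T - u) ^ (α - 1) * (T - v) ^ (-α) := by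
    have := rpow_nonneg (sub_nonneg.2 (hu.trans ht.le)) (α - 1)
    have := rpow_nonneg (sub_nonneg.2 (hvu.trans (hu.trans ht.le))) (-α)
    positivity
  calc fkerScale T α t ^ 2 * ((T - u) ^ (α - 1) * (T - v) ^ (-α)) * (T - v)⁻¹
      ≤ fkerScale T α t ^ 2 * ((T - u) ^ (α - 1) * (T - v) ^ (-α)) * (T - w)⁻¹ := by
        gcongr
        linarith [hw.1]
    _ = fker T α t u w * fker T α t v w := by
        rw [fker_of_le (hv.trans hw.1) hw.2 hu, fker_comm v w,
          fker_of_le hv hw.1 (hw.2.trans hu), ← hw_pow]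
        ring

lemma contr_fker_mul_fker_ge (hα : 0 ≤ α) (ht : t < T) {u v : ℝ} (hu : u ≤ t)
    (hv : v ∈ Icc (T - 2 * (T - u)) (T - 3 / 2 * (T - u))) (hv0 : 0 ≤ v) :
    fkerScale T α t ^ 3 * (2 ^ (-α)) ^ 2 / 3 * ((T - u) ^ 2)⁻¹ ≤
      contr T (fker T α t) (fker T α t) u v * fker T α t u v := by
  obtain ⟨hv₁, hv₂⟩ := hv
  have hTu : 0 < T - u := by linarith
  have hTv : 0 < T - v := by linarith
  have hvu : v ≤ u := by linarith
  set s := fkerScale T α t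
  set X := (T - u) ^ (α - 1) * (T - v) ^ (-α)
  have hs : 0 ≤ s := fkerScale_nonneg T α t
  have hm : 2 ^ (-α) * (T - u)⁻¹ ≤ X := inv_le_rpow_mul_rpow_neg hα hTu hTv (by linarith)
  have hK : s ^ 2 * (2 ^ (-α) * (T - u)⁻¹) / 3 ≤ contr T (fker T α t) (fker T α t) u v := by
    refine le_trans ?_ (contr_fker_ge ht hv0 hvu hu)
    have hthird : 1 / 3 ≤ (T - v)⁻¹ * (u - v) := by
      rw [inv_mul_eq_div, le_div_iff₀ hTv]
      linarith
    calc s ^ 2 * (2 ^ (-α) * (T - u)⁻¹) / 3 = s ^ 2 * (2 ^ (-α) * (T - u)⁻¹) * (1 / 3) := by ring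
      _ ≤ s ^ 2 * X * ((T - v)⁻¹ * (u - v)) := by gcongr
      _ = s ^ 2 * X * (T - v)⁻¹ * (u - v) := by ring
  calc s ^ 3 * (2 ^ (-α)) ^ 2 / 3 * ((T - u) ^ 2)⁻¹
      = s ^ 2 * (2 ^ (-α) * (T - u)⁻¹) / 3 * (s * (2 ^ (-α) * (T - u)⁻¹)) := by
        rw [← inv_pow]
        ring
    _ ≤ contr T (fker T α t) (fker T α t) u v * (s * X) :=
        mul_le_mul hK (mul_le_mul_of_nonneg_left hm hs) (by positivity)
          (contr_nonneg (fker_nonneg ht.le) (fker_nonneg ht.le) u v)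
    _ = contr T (fker T α t) (fker T α t) u v * fker T α t u v := by
        rw [fker_of_le hv0 hvu hu]

lemma integral_contr_fker_mul_fker_ge (hα : 0 ≤ α) (ht : t < T) {u : ℝ} (hu : u ≤ t)
    (hTu : T - u ≤ T / 2) :
    fkerScale T α t ^ 3 * (2 ^ (-α)) ^ 2 / 6 * (T - u)⁻¹ ≤
      ∫ v in Icc 0 T, contr T (fker T α t) (fker T α t) u v * fker T α t u v := by
  have hf := isBoundedKernel_fker (α := α) ht
  have hTu0 : 0 < T - u := by linarith
  have h := mul_sub_le_setIntegral (g := fun v => contr T (fker T α t) (fker T α t) u v *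
      fker T α t u v) (by linarith) (Icc_subset_Icc (by linarith) (by linarith))
    (((hf.contr T hf).mul hf).integrableOn u 0 T)
    (fun v => mul_nonneg (contr_nonneg (fker_nonneg ht.le) (fker_nonneg ht.le) u v)
      (fker_nonneg ht.le u v))
    fun v hv => contr_fker_mul_fker_ge hα ht hu hv (by linarith [hv.1])
  convert h using 1
  field_simp
  ring

lemma integral_Icc_inv_sub {T a b : ℝ} (hab : a ≤ b) (hb : b < T) :
    ∫ u in Icc a b, (T - u)⁻¹ = log (T - a) - log (T - b) := by
  rw [integral_Icc_eq_integral_Ioc, ← intervalIntegral.integral_of_le hab,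
    intervalIntegral.integral_comp_sub_left (fun x => x⁻¹) T, integral_inv, log_div]
  · exact (sub_pos.2 (hab.trans_lt hb)).ne'
  · exact (sub_pos.2 hb).ne'
  · rw [uIcc_of_le (by linarith)]
    exact fun h => by linarith [h.1]

lemma ip_contr_fker_ge (hα : 0 ≤ α) {δ : ℝ} (hδ : 0 < δ) (hδT : δ ≤ T / 2) (hδt : T - δ ≤ t)
    (ht : t < T) :
    fkerScale T α t ^ 3 * (2 ^ (-α)) ^ 2 / 6 * (log δ - log (T - t)) ≤
      ip T (contr T (fker T α t) (fker T α t)) (fker T α t) := by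
  have hf := isBoundedKernel_fker (α := α) ht
  have hF := ((hf.contr T hf).mul hf).integrableOn_setIntegral 0 T 0 T
  calc fkerScale T α t ^ 3 * (2 ^ (-α)) ^ 2 / 6 * (log δ - log (T - t))
      = ∫ u in Icc (T - δ) t, fkerScale T α t ^ 3 * (2 ^ (-α)) ^ 2 / 6 * (T - u)⁻¹ := by
        rw [integral_const_mul, integral_Icc_inv_sub hδt ht, sub_sub_cancel]
    _ ≤ ∫ u in Icc (T - δ) t,
          ∫ v in Icc 0 T, contr T (fker T α t) (fker T α t) u v * fker T α t u v := by
        refine setIntegral_mono_on ?_ (hF.mono_set (Icc_subset_Icc (by linarith) ht.le))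
          measurableSet_Icc fun u hu =>
            integral_contr_fker_mul_fker_ge hα ht hu.2 (by linarith [hu.1])
        refine ContinuousOn.integrableOn_Icc
          (continuousOn_const.mul (ContinuousOn.inv₀ (by fun_prop) fun u hu => ?_))
        linarith [hu.2]
    _ ≤ ip T (contr T (fker T α t) (fker T α t)) (fker T α t) :=
        setIntegral_mono_set hF (ae_of_all _ fun u => integral_nonneg fun v =>
          mul_nonneg (contr_nonneg (fker_nonneg ht.le) (fker_nonneg ht.le) u v)
            (fker_nonneg ht.le u v)) (Icc_subset_Icc (by linarith) ht.le).eventuallyLE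

end fker

lemma fkerScale_pow_three_mul_abs_log {T α t : ℝ} (hα : 1 / 2 < α) (hL : 0 < |log (T - t)|) :
    fkerScale T α t ^ 3 * |log (T - t)| =
      (2 * α - 1) * √(2 * α - 1) / (8 * √|log (T - t)|) := by
  have hβ : 0 < 2 * α - 1 := by linarith
  rw [fkerScale, lam, sqrt_div hL.le]
  field_simp
  nth_rewrite 1 [← sq_sqrt hL.le]
  nth_rewrite 2 [← sq_sqrt hβ.le]
  ring

theorem stmt_19 (T α : ℝ) (hT : 0 < T) (hα : 1 / 2 < α) :
    ∃ c > 0, ∃ t₀ : ℝ, max 0 (T - 1 / Real.exp 1) < t₀ ∧ t₀ < T ∧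
      ∀ t : ℝ, t₀ < t → t < T →
        c / Real.sqrt |Real.log (T - t)|
          ≤ |ip T (contr T (fker T α t) (fker T α t)) (fker T α t)| := by
  set δ := min (1 / exp 1) (T / 2)
  have hδ : 0 < δ := lt_min (by positivity) (by linarith)
  have hδT : δ ≤ T / 2 := min_le_right _ _
  have hδ1 : δ < 1 :=
    (min_le_left _ _).trans_lt <| (div_lt_one (exp_pos 1)).2 (one_lt_exp_iff.2 one_pos)
  have hδ2 : δ ^ 2 < δ := by nlinarith
  have hβ : 0 < 2 * α - 1 := by linarith
  refine ⟨(2 ^ (-α)) ^ 2 * ((2 * α - 1) * √(2 * α - 1)) / 96, by positivity, T - δ ^ 2, ?_,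
    sub_lt_self T (by positivity), fun t ht₀ ht => ?_⟩
  · exact max_lt (by linarith) (by linarith [min_le_left (1 / exp 1) (T / 2)])
  have hε : 0 < T - t := by linarith
  have hlog : log (T - t) < 2 * log δ := by
    calc log (T - t) < log (δ ^ 2) := log_lt_log hε (by linarith)
      _ = 2 * log δ := by rw [log_pow]; norm_num
  have hlog0 : log (T - t) < 0 := log_neg hε (by linarith)
  have hL : |log (T - t)| = -log (T - t) := abs_of_neg hlog0
  calc (2 ^ (-α)) ^ 2 * ((2 * α - 1) * √(2 * α - 1)) / 96 / √|log (T - t)|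
      = fkerScale T α t ^ 3 * (2 ^ (-α)) ^ 2 / 6 * (|log (T - t)| / 2) := by
        rw [show ∀ s m L : ℝ, s ^ 3 * m / 6 * (L / 2) = m / 12 * (s ^ 3 * L) by intros; ring,
          fkerScale_pow_three_mul_abs_log hα (abs_pos_of_neg hlog0)]
        field_simp
        ring
    _ ≤ fkerScale T α t ^ 3 * (2 ^ (-α)) ^ 2 / 6 * (log δ - log (T - t)) := by
        have := fkerScale_nonneg T α t
        gcongr
        linarith
    _ ≤ ip T (contr T (fker T α t) (fker T α t)) (fker T α t) :=
        ip_contr_fker_ge (by linarith) hδ hδT (by linarith) ht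
    _ ≤ _ := le_abs_self _
end
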